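/- arXiv:1304.2260 — 11 statements merged into one kernel-verified Lean document; each statement's English description precedes it below -/
import Mathlib

section
/- Let d and r be integers with 2 ≤ r ≤ d, let p be a real number with r/d ≤ p < 1, and let x ∈ [0,1). Then the binomial upper tail satisfies ∑_{j=d-r+1}^{d} C(d,j)·((1-x)(1-p))^j·(1-(1-x)(1-p))^{d-j} < 1 - x. Equivalently, P(Bin(d,(1-x)(1-p)) ≤ d-r) > x, so the fixed-point equation x = P(Bin(d,(1-x)(1-p)) ≤ d-r) has no solution x ∈ [0,1). -/
lemma binom_mean (n : ℕ) (q : ℝ) :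
    ∑ j ∈ Finset.range (n+1), (j : ℝ) * (n.choose j : ℝ) * q ^ j * (1 - q) ^ (n - j)
      = n * q := by
  cases n with
  | zero => simp
  | succ m =>
    rw [Finset.sum_range_succ']
    have key : ∀ i ∈ Finset.range (m+1),
        ((i+1 : ℕ) : ℝ) * ((m+1).choose (i+1) : ℝ) * q ^ (i+1) * (1 - q) ^ (m+1-(i+1))
          = ((m+1 : ℕ) : ℝ) * q * ((m.choose i : ℝ) * q ^ i * (1 - q) ^ (m - i)) := by
      intro i _
      have h' : ((m+1) * m.choose i : ℕ) = ((m+1).choose (i+1) * (i+1) : ℕ) :=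
        Nat.add_one_mul_choose_eq m i
      have hc : ((m+1 : ℕ) : ℝ) * (m.choose i : ℝ)
          = ((m+1).choose (i+1) : ℝ) * ((i+1 : ℕ) : ℝ) := by exact_mod_cast h'
      have hmi : m + 1 - (i+1) = m - i := by omega
      rw [hmi]
      push_cast at hc ⊢
      linear_combination (q ^ (i+1) * (1 - q) ^ (m - i)) * hc.symm
    rw [Finset.sum_congr rfl key, ← Finset.mul_sum]
    have hb : ∑ i ∈ Finset.range (m+1), (m.choose i : ℝ) * q ^ i * (1 - q) ^ (m - i) = 1 := by
      have h := add_pow q (1-q) m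
      have h2 : q + (1 - q) = 1 := by ring
      rw [h2, one_pow] at h
      rw [show (∑ i ∈ Finset.range (m+1), (m.choose i : ℝ) * q ^ i * (1 - q) ^ (m - i))
          = ∑ i ∈ Finset.range (m+1), q ^ i * (1 - q) ^ (m - i) * (m.choose i : ℝ) from
            Finset.sum_congr rfl fun i _ => by ring, ← h]
    rw [hb]
    push_cast
    ring

/-- For integers `2 ≤ r ≤ d` and reals `r/d ≤ p < 1`, `0 ≤ x < 1`,
the binomial upper tail `P(Bin(d,(1-x)(1-p)) ≥ d-r+1)` is strictly less than `1 - x`. -/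
theorem binomial_tail_lt (d r : ℕ) (hr : 2 ≤ r) (hrd : r ≤ d)
    (p x : ℝ) (hp1 : (r : ℝ) / d ≤ p) (hp2 : p < 1) (hx0 : 0 ≤ x) (hx1 : x < 1) :
    ∑ j ∈ Finset.Icc (d - r + 1) d,
        (d.choose j : ℝ) * ((1 - x) * (1 - p)) ^ j * (1 - (1 - x) * (1 - p)) ^ (d - j)
      < 1 - x := by
  set q : ℝ := (1 - x) * (1 - p) with hq
  have hd0 : (0:ℝ) < d := by
    have : 2 ≤ d := le_trans hr hrd
    exact_mod_cast Nat.lt_of_lt_of_le (by norm_num) this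
  have hq0 : 0 ≤ q := mul_nonneg (by linarith) (by linarith)
  have hq1 : q ≤ 1 := by
    have hp0 : (0:ℝ) ≤ p := le_trans (by positivity) hp1
    nlinarith
  have h1q : 0 ≤ 1 - q := by linarith
  set k : ℕ := d - r + 1 with hk
  have hterm : ∀ j : ℕ, 0 ≤ (d.choose j : ℝ) * q ^ j * (1 - q) ^ (d - j) := fun j =>
    mul_nonneg (mul_nonneg (Nat.cast_nonneg _) (pow_nonneg hq0 _)) (pow_nonneg h1q _)
  have hkcast : ((k : ℕ) : ℝ) = (d : ℝ) - r + 1 := by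
    rw [hk]; push_cast [Nat.cast_sub hrd]; ring
  have hkpos : (0:ℝ) < (k : ℝ) := by positivity
  -- Markov step
  have hmarkov : (k : ℝ) * ∑ j ∈ Finset.Icc k d,
      (d.choose j : ℝ) * q ^ j * (1 - q) ^ (d - j) ≤ (d : ℝ) * q := by
    rw [Finset.mul_sum]
    calc ∑ j ∈ Finset.Icc k d, (k : ℝ) * ((d.choose j : ℝ) * q ^ j * (1 - q) ^ (d - j))
        ≤ ∑ j ∈ Finset.Icc k d, (j : ℝ) * ((d.choose j : ℝ) * q ^ j * (1 - q) ^ (d - j)) := by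
          apply Finset.sum_le_sum
          intro j hj
          have hjk : k ≤ j := (Finset.mem_Icc.mp hj).1
          exact mul_le_mul_of_nonneg_right (by exact_mod_cast hjk) (hterm j)
      _ ≤ ∑ j ∈ Finset.range (d+1), (j : ℝ) * ((d.choose j : ℝ) * q ^ j * (1 - q) ^ (d - j)) := by
          apply Finset.sum_le_sum_of_subset_of_nonneg
          · intro j hj
            exact Finset.mem_range.mpr (Nat.lt_succ_of_le (Finset.mem_Icc.mp hj).2)
          · intro j _ _
            exact mul_nonneg (Nat.cast_nonneg _) (hterm j)
      _ = (d : ℝ) * q := by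
          rw [← binom_mean d q]
          exact Finset.sum_congr rfl fun j _ => by ring
  -- final arithmetic
  have hdr : (d : ℝ) * (1 - p) ≤ (d : ℝ) - r := by
    have : (r : ℝ) ≤ d * p := by
      rw [div_le_iff₀ hd0] at hp1
      linarith
    linarith
  have hfin : (d : ℝ) * q < (k : ℝ) * (1 - x) := by
    rw [hkcast, hq]
    have hx : (0:ℝ) < 1 - x := by linarith
    nlinarith [mul_le_mul_of_nonneg_right hdr (le_of_lt hx)]
  have := lt_of_le_of_lt hmarkov hfin
  exact lt_of_mul_lt_mul_left this (le_of_lt hkpos)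
end

section
/- Let r and k be integers with 2 ≤ r ≤ k. Then for every real x, g_{k+1}^r(x) = g_r^r(x) - ∑_{i=r}^{k} C(i,r-1)·x^{i-r}·(1-x)^r, where g_r^r(x) = ∑_{i=0}^{r-1} (1-x)^i. In particular, for every x ∈ [0,1] and every integer k ≥ r, g_k^r(x) ≤ g_r^r(x) = ∑_{i=0}^{r-1} (1-x)^i. -/
open Finset

/-- The polynomial `g_k^r(x) = ∑_{i=0}^{r-1} C(k,i) x^(k-i-1) (1-x)^i`. -/
noncomputable def g (r k : ℕ) (x : ℝ) : ℝ :=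
  ∑ i ∈ Finset.range r, (k.choose i : ℝ) * x ^ (k - i - 1) * (1 - x) ^ i

lemma g_base (r : ℕ) (x : ℝ) : g r r x = ∑ i ∈ Finset.range r, (1 - x) ^ i := by
  induction r with
  | zero => simp [g]
  | succ n ih =>
    have hbin : ∑ i ∈ Finset.range (n + 1),
        (1 - x) ^ i * x ^ (n - i) * (n.choose i : ℝ) = 1 := by
      have h := add_pow (1 - x) x n
      simp at h
      exact h.symm
    rw [Finset.sum_range_succ'] at hbin
    simp only [pow_zero, Nat.sub_zero, Nat.choose_zero_right, Nat.cast_one, one_mul,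
      mul_one] at hbin
    have hS : ∑ i ∈ Finset.range n,
        (n.choose (i + 1) : ℝ) * x ^ (n - i - 1) * (1 - x) ^ (i + 1) = 1 - x ^ n := by
      have hc : ∑ i ∈ Finset.range n,
          (n.choose (i + 1) : ℝ) * x ^ (n - i - 1) * (1 - x) ^ (i + 1)
          = ∑ i ∈ Finset.range n, (1 - x) ^ (i + 1) * x ^ (n - (i + 1)) * (n.choose (i + 1) : ℝ) :=
        Finset.sum_congr rfl (fun i _ => by rw [Nat.sub_sub]; ring)
      rw [hc]; linarith
    have expand : g (n + 1) (n + 1) x =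
        (∑ i ∈ Finset.range n, (n.choose i : ℝ) * x ^ (n - i - 1) * (1 - x) ^ (i + 1)) +
        (∑ i ∈ Finset.range n, (n.choose (i + 1) : ℝ) * x ^ (n - i - 1) * (1 - x) ^ (i + 1)) +
        x ^ n := by
      unfold g
      rw [Finset.sum_range_succ']
      have h0 : ((n + 1).choose 0 : ℝ) * x ^ (n + 1 - 0 - 1) * (1 - x) ^ 0 = x ^ n := by simp
      rw [h0, ← Finset.sum_add_distrib]
      congr 1
      refine Finset.sum_congr rfl (fun i hi => ?_)
      rw [Nat.choose_succ_succ n i]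
      have he : n + 1 - (i + 1) - 1 = n - i - 1 := by omega
      rw [he]
      push_cast
      ring
    have h1 : (∑ i ∈ Finset.range n, (n.choose i : ℝ) * x ^ (n - i - 1) * (1 - x) ^ (i + 1))
        = (1 - x) * g n n x := by
      unfold g
      rw [Finset.mul_sum]
      exact Finset.sum_congr rfl (fun i _ => by ring)
    rw [expand, hS, h1, ih, Finset.sum_range_succ' (fun i => (1 - x) ^ i) n]
    have hgeo : ∑ i ∈ Finset.range n, (1 - x) ^ (i + 1)
        = (1 - x) * ∑ i ∈ Finset.range n, (1 - x) ^ i := by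
      rw [Finset.mul_sum]
      exact Finset.sum_congr rfl (fun i _ => by ring)
    rw [hgeo]
    ring

lemma g_step (r k : ℕ) (hr : 1 ≤ r) (hk : r ≤ k) (x : ℝ) :
    g r (k + 1) x = g r k x - (k.choose (r - 1) : ℝ) * x ^ (k - r) * (1 - x) ^ r := by
  obtain ⟨s, rfl⟩ : ∃ s, r = s + 1 := ⟨r - 1, by omega⟩
  have expand : g (s + 1) (k + 1) x =
      (∑ i ∈ Finset.range s, (k.choose i : ℝ) * x ^ (k - i - 1) * (1 - x) ^ (i + 1)) +
      (∑ i ∈ Finset.range s, (k.choose (i + 1) : ℝ) * x ^ (k - i - 1) * (1 - x) ^ (i + 1)) +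
      x ^ k := by
    unfold g
    rw [Finset.sum_range_succ']
    have h0 : ((k + 1).choose 0 : ℝ) * x ^ (k + 1 - 0 - 1) * (1 - x) ^ 0 = x ^ k := by simp
    rw [h0, ← Finset.sum_add_distrib]
    congr 1
    refine Finset.sum_congr rfl (fun i hi => ?_)
    rw [Nat.choose_succ_succ k i]
    have he : k + 1 - (i + 1) - 1 = k - i - 1 := by omega
    rw [he]
    push_cast
    ring
  have hA : (∑ i ∈ Finset.range s, (k.choose i : ℝ) * x ^ (k - i - 1) * (1 - x) ^ (i + 1))
      = (1 - x) * g (s + 1) k x - (k.choose s : ℝ) * x ^ (k - (s + 1)) * (1 - x) ^ (s + 1) := by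
    unfold g
    rw [Finset.mul_sum, Finset.sum_range_succ]
    have hc : ∑ i ∈ Finset.range s, (k.choose i : ℝ) * x ^ (k - i - 1) * (1 - x) ^ (i + 1)
        = ∑ i ∈ Finset.range s, (1 - x) * ((k.choose i : ℝ) * x ^ (k - i - 1) * (1 - x) ^ i) :=
      Finset.sum_congr rfl (fun i _ => by ring)
    rw [hc]
    have he : k - s - 1 = k - (s + 1) := by omega
    rw [he]
    ring
  have hB : (∑ i ∈ Finset.range s, (k.choose (i + 1) : ℝ) * x ^ (k - i - 1) * (1 - x) ^ (i + 1))
      + x ^ k = x * g (s + 1) k x := by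
    unfold g
    rw [Finset.mul_sum, Finset.sum_range_succ' (fun i =>
      x * ((k.choose i : ℝ) * x ^ (k - i - 1) * (1 - x) ^ i))]
    have h0 : x * ((k.choose 0 : ℝ) * x ^ (k - 0 - 1) * (1 - x) ^ 0) = x ^ k := by
      simp only [Nat.choose_zero_right, Nat.cast_one, pow_zero, mul_one, one_mul, Nat.sub_zero]
      rw [← pow_succ']
      congr 1
      omega
    rw [h0]
    congr 1
    refine Finset.sum_congr rfl (fun i hi => ?_)
    have hi' : i < s := Finset.mem_range.mp hi
    rw [show k - i - 1 = (k - (i + 1) - 1) + 1 by omega, pow_succ]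
    ring
  rw [expand, add_assoc, hB, hA]
  simp only [Nat.add_sub_cancel]
  ring

lemma g_main (r : ℕ) (hr : 1 ≤ r) : ∀ k, r ≤ k → ∀ x : ℝ,
    g r (k + 1) x = (∑ i ∈ Finset.range r, (1 - x) ^ i) -
      ∑ i ∈ Finset.Icc r k, (i.choose (r - 1) : ℝ) * x ^ (i - r) * (1 - x) ^ r := by
  intro k hk
  induction k, hk using Nat.le_induction with
  | base =>
    intro x
    rw [g_step r r hr le_rfl, g_base]
    simp
  | succ k hk ih =>
    intro x
    rw [g_step r (k + 1) hr (by omega), ih x]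
    rw [Finset.sum_Icc_succ_top (by omega : r ≤ k + 1)]
    ring

/-- For `2 ≤ r ≤ k`,
`g_{k+1}^r(x) = g_r^r(x) - ∑_{i=r}^{k} C(i,r-1) x^(i-r) (1-x)^r` for every real `x`,
where `g_r^r(x) = ∑_{i=0}^{r-1} (1-x)^i`; in particular `g_m^r(x) ≤ g_r^r(x)` for all
`x ∈ [0,1]` and `m ≥ r`. -/
theorem g_eq_and_le (r k : ℕ) (hr : 2 ≤ r) (hk : r ≤ k) :
    (∀ x : ℝ, g r (k + 1) x =
        (∑ i ∈ Finset.range r, (1 - x) ^ i) -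
          ∑ i ∈ Finset.Icc r k, (i.choose (r - 1) : ℝ) * x ^ (i - r) * (1 - x) ^ r) ∧
      (∀ x ∈ Set.Icc (0 : ℝ) 1, ∀ m : ℕ, r ≤ m →
        g r m x ≤ ∑ i ∈ Finset.range r, (1 - x) ^ i) := by
  constructor
  · exact g_main r (by omega) k hk
  · rintro x ⟨hx0, hx1⟩ m hm
    rcases eq_or_lt_of_le hm with h | h
    · rw [← h, g_base]
    · obtain ⟨j, rfl⟩ : ∃ j, m = j + 1 := ⟨m - 1, by omega⟩
      rw [g_main r (by omega) j (by omega) x]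
      have hnn : 0 ≤ ∑ i ∈ Finset.Icc r j, (i.choose (r - 1) : ℝ) * x ^ (i - r) * (1 - x) ^ r := by
        refine Finset.sum_nonneg (fun i hi => ?_)
        exact mul_nonneg (mul_nonneg (Nat.cast_nonneg _) (pow_nonneg hx0 _))
          (pow_nonneg (by linarith) _)
      linarith
end

section
/- Let r and k be integers with 2 ≤ r < k. Then ∫_0^1 (g_r^r(x) - g_k^r(x))/(1-x)^2 dx = (k-r)/(r-1) + H_{k-r}, where H_n = ∑_{i=1}^n 1/i is the n-th harmonic number. -/
open MeasureTheory intervalIntegral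



lemma prod_shift (a b : ℕ) :
    (∏ j ∈ Finset.range (b + 1), (a + 1 + j)) * a.factorial = (a + b + 1).factorial := by
  induction b with
  | zero => simp [Nat.factorial_succ]
  | succ b ih =>
      rw [Finset.prod_range_succ, mul_right_comm, ih,
        show a + (b+1) + 1 = (a + b + 1) + 1 by omega]
      conv_rhs => rw [Nat.factorial_succ]
      ring

lemma beta_nat (a b : ℕ) :
    ∫ x in (0:ℝ)..1, x ^ a * (1 - x) ^ b
      = (a.factorial : ℝ) * b.factorial / (a + b + 1).factorial := by
  have hu : (0:ℝ) < ((a:ℂ) + 1).re := by simp; positivity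
  have h := Complex.betaIntegral_eval_nat_add_one_right hu b
  rw [Complex.betaIntegral] at h
  have heq : ∀ x : ℝ, ((x:ℂ)) ^ ((a:ℂ) + 1 - 1) * ((1:ℂ) - x) ^ ((b:ℂ) + 1 - 1)
      = ((x ^ a * (1 - x) ^ b : ℝ) : ℂ) := by
    intro x
    rw [add_sub_cancel_right, add_sub_cancel_right, Complex.cpow_natCast, Complex.cpow_natCast]
    push_cast; ring
  simp_rw [heq] at h
  rw [intervalIntegral.integral_ofReal] at h
  have hpC : (∏ j ∈ Finset.range (b + 1), ((a:ℂ) + 1 + j)) * (a.factorial : ℂ)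
      = ((a + b + 1).factorial : ℂ) := by exact_mod_cast prod_shift a b
  have hfa : ((a.factorial : ℂ)) ≠ 0 := Nat.cast_ne_zero.2 (Nat.factorial_ne_zero a)
  have hfn : (((a + b + 1).factorial : ℂ)) ≠ 0 := Nat.cast_ne_zero.2 (Nat.factorial_ne_zero _)
  have hP : (∏ j ∈ Finset.range (b + 1), ((a:ℂ) + 1 + j)) ≠ 0 := by
    intro h0; rw [h0, zero_mul] at hpC; exact hfn hpC.symm
  have : ((∫ x in (0:ℝ)..1, x ^ a * (1 - x) ^ b : ℝ) : ℂ)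
      = (((a.factorial : ℝ) * b.factorial / (a + b + 1).factorial : ℝ) : ℂ) := by
    rw [h, (eq_div_iff hfa).mpr hpC]
    push_cast
    field_simp
  exact_mod_cast this

lemma Fh_base (r : ℕ) (x : ℝ) :
    ∑ i ∈ Finset.range r, (r.choose i : ℝ) * x ^ (r - i) * (1 - x) ^ i
      = 1 - (1 - x) ^ r := by
  have h := add_pow (1 - x) x r
  rw [sub_add_cancel, one_pow, Finset.sum_range_succ, Nat.choose_self, Nat.sub_self,
    pow_zero] at h
  push_cast at h
  have : ∑ i ∈ Finset.range r, (r.choose i : ℝ) * x ^ (r - i) * (1 - x) ^ i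
      = ∑ i ∈ Finset.range r, (1 - x) ^ i * x ^ (r - i) * (r.choose i : ℝ) :=
    Finset.sum_congr rfl fun i _ => by ring
  rw [this]
  linear_combination -h

lemma Fh_succ (s k : ℕ) (hk : s + 1 ≤ k) (x : ℝ) :
    ∑ i ∈ Finset.range (s + 1), (((k+1).choose i : ℝ)) * x ^ (k + 1 - i) * (1 - x) ^ i
      = ∑ i ∈ Finset.range (s + 1), ((k.choose i : ℝ)) * x ^ (k - i) * (1 - x) ^ i
        - (k.choose s : ℝ) * x ^ (k - s) * (1 - x) ^ (s + 1) := by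
  have hA : ∑ i ∈ Finset.range (s + 1), ((k.choose i : ℝ)) * x ^ (k - i) * (1 - x) ^ i
      = ∑ i ∈ Finset.range (s + 1), ((k.choose i : ℝ)) * x ^ (k + 1 - i) * (1 - x) ^ i
      + ∑ i ∈ Finset.range (s + 1), ((k.choose i : ℝ)) * x ^ (k - i) * (1 - x) ^ (i + 1) := by
    rw [← Finset.sum_add_distrib]
    refine Finset.sum_congr rfl fun i hi => ?_
    have e1 : k + 1 - i = (k - i) + 1 := by
      have := Finset.mem_range.1 hi; omega
    rw [e1, pow_succ, pow_succ]
    ring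
  have eL := Finset.sum_range_succ'
    (fun i => (((k+1).choose i : ℝ)) * x ^ (k + 1 - i) * (1 - x) ^ i) s
  simp only [Nat.choose_zero_right, Nat.cast_one, one_mul, Nat.sub_zero, pow_zero, mul_one] at eL
  have eT : ∑ i ∈ Finset.range s, (((k+1).choose (i+1) : ℝ)) * x ^ (k + 1 - (i+1)) * (1 - x) ^ (i+1)
      = ∑ i ∈ Finset.range s, ((k.choose i : ℝ)) * x ^ (k - i) * (1 - x) ^ (i+1)
      + ∑ i ∈ Finset.range s, ((k.choose (i+1) : ℝ)) * x ^ (k - i) * (1 - x) ^ (i+1) := by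
    rw [← Finset.sum_add_distrib]
    refine Finset.sum_congr rfl fun i hi => ?_
    have e1 : k + 1 - (i + 1) = k - i := by omega
    rw [e1, Nat.choose_succ_succ]
    push_cast
    ring
  have eB := Finset.sum_range_succ
    (fun i => ((k.choose i : ℝ)) * x ^ (k - i) * (1 - x) ^ (i + 1)) s
  have eA := Finset.sum_range_succ'
    (fun i => ((k.choose i : ℝ)) * x ^ (k + 1 - i) * (1 - x) ^ i) s
  simp only [Nat.choose_zero_right, Nat.cast_one, one_mul, Nat.sub_zero, pow_zero, mul_one] at eA
  have eS2 : ∑ i ∈ Finset.range s, ((k.choose (i+1) : ℝ)) * x ^ (k + 1 - (i+1)) * (1 - x) ^ (i+1)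
      = ∑ i ∈ Finset.range s, ((k.choose (i+1) : ℝ)) * x ^ (k - i) * (1 - x) ^ (i+1) :=
    Finset.sum_congr rfl fun i hi => by rw [show k + 1 - (i+1) = k - i by omega]
  rw [eS2] at eA
  linear_combination eL + eT - eB - eA - hA


lemma Fh_master (r k : ℕ) (hr : 1 ≤ r) (hk : r ≤ k) (x : ℝ) :
    ∑ i ∈ Finset.range r, (k.choose i : ℝ) * x ^ (k - i) * (1 - x) ^ i
      = 1 - (1 - x) ^ r
        - ∑ j ∈ Finset.Ico r k, (j.choose (r - 1) : ℝ) * x ^ (j - r + 1) * (1 - x) ^ r := by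
  obtain ⟨s, rfl⟩ : ∃ s, r = s + 1 := ⟨r - 1, by omega⟩
  induction k, hk using Nat.le_induction with
  | base => rw [Finset.Ico_self, Finset.sum_empty, sub_zero]; exact Fh_base (s + 1) x
  | succ k hk ih =>
      rw [Fh_succ s k hk x, ih, Finset.sum_Ico_succ_top hk]
      have e : (k.choose (s + 1 - 1) : ℝ) * x ^ (k - (s + 1) + 1) * (1 - x) ^ (s + 1)
          = (k.choose s : ℝ) * x ^ (k - s) * (1 - x) ^ (s + 1) := by
        rw [show s + 1 - 1 = s from rfl, show k - (s + 1) + 1 = k - s by omega]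
      rw [e]
      ring


lemma integrand_eq (r k : ℕ) (hr : 2 ≤ r) (hk : r < k) {x : ℝ} (hx0 : x ≠ 0) (hx1 : x ≠ 1) :
    ((∑ i ∈ Finset.range r, (1 - x) ^ i) - g r k x) / (1 - x) ^ 2
      = ∑ j ∈ Finset.Ico r k, (j.choose (r - 1) : ℝ) * (x ^ (j - r) * (1 - x) ^ (r - 2)) := by
  have h1x : (1 : ℝ) - x ≠ 0 := fun h => hx1 (by linarith)
  have hg : x * g r k x = ∑ i ∈ Finset.range r, (k.choose i : ℝ) * x ^ (k - i) * (1 - x) ^ i := by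
    unfold g
    rw [Finset.mul_sum]
    refine Finset.sum_congr rfl fun i hi => ?_
    have hik : i < r := Finset.mem_range.1 hi
    have e : x * x ^ (k - i - 1) = x ^ (k - i) := by
      rw [← pow_succ']; congr 1; omega
    rw [← e]; ring
  have hM := Fh_master r k (by omega) hk.le x
  have hgeom : x * ∑ i ∈ Finset.range r, (1 - x) ^ i = 1 - (1 - x) ^ r := by
    have h := geom_sum_mul (1 - x) r
    linear_combination -h
  have hS : x * ((∑ j ∈ Finset.Ico r k, (j.choose (r - 1) : ℝ) * (x ^ (j - r) * (1 - x) ^ (r - 2)))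
        * (1 - x) ^ 2)
      = ∑ j ∈ Finset.Ico r k, (j.choose (r - 1) : ℝ) * x ^ (j - r + 1) * (1 - x) ^ r := by
    rw [Finset.sum_mul, Finset.mul_sum]
    refine Finset.sum_congr rfl fun j hj => ?_
    have hjr : r ≤ j := (Finset.mem_Ico.1 hj).1
    have e : (1 - x) ^ r = (1 - x) ^ (r - 2) * (1 - x) ^ 2 := by
      rw [← pow_add]; congr 1; omega
    rw [pow_succ, e]
    ring
  rw [div_eq_iff (pow_ne_zero 2 h1x)]
  apply mul_left_cancel₀ hx0
  rw [hS, mul_sub, hgeom, hg, hM]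
  ring

lemma term_value (r i : ℕ) (hr : 2 ≤ r) :
    ((r + i).choose (r - 1) : ℝ)
        * (((i : ℕ).factorial : ℝ) * ((r - 2 : ℕ).factorial : ℝ)
          / ((i + (r - 2) + 1).factorial : ℝ))
      = 1 / ((r : ℝ) - 1) + 1 / ((i : ℝ) + 1) := by
  have hch := Nat.choose_mul_factorial_mul_factorial (show r - 1 ≤ r + i by omega)
  rw [show r + i - (r - 1) = i + 1 by omega] at hch
  have e1 : (r - 1).factorial = (r - 1) * (r - 2).factorial := by
    rw [show r - 1 = (r - 2) + 1 by omega, Nat.factorial_succ]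
  have e2 : (r + i).factorial = (r + i) * (i + (r - 2) + 1).factorial := by
    rw [show i + (r - 2) + 1 = r + i - 1 by omega, show r + i = (r + i - 1) + 1 by omega,
      Nat.factorial_succ]
    congr 2 <;> omega
  rw [e1, e2] at hch
  have efi : (((i + 1).factorial : ℕ) : ℝ) = ((i : ℝ) + 1) * ((i : ℕ).factorial : ℝ) := by
    rw [Nat.factorial_succ]; push_cast; ring
  have hchR : ((r + i).choose (r - 1) : ℝ) * (((r : ℝ) - 1) * ((r - 2 : ℕ).factorial : ℝ))
      * (((i : ℝ) + 1) * ((i : ℕ).factorial : ℝ))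
      = ((r : ℝ) + i) * (((i + (r - 2) + 1).factorial : ℝ)) := by
    have := congrArg (Nat.cast : ℕ → ℝ) hch
    push_cast [Nat.cast_sub (show 1 ≤ r by omega)] at this
    rw [efi] at this
    linear_combination this
  have hr1 : (r : ℝ) - 1 ≠ 0 := by
    have : (2 : ℝ) ≤ (r : ℝ) := by exact_mod_cast hr
    intro h; linarith
  have hi1 : (i : ℝ) + 1 ≠ 0 := by positivity
  have hf : (((i + (r - 2) + 1).factorial : ℝ)) ≠ 0 :=
    Nat.cast_ne_zero.2 (Nat.factorial_ne_zero _)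
  have key : ((r + i).choose (r - 1) : ℝ)
      * (((i : ℕ).factorial : ℝ) * ((r - 2 : ℕ).factorial : ℝ)
        / ((i + (r - 2) + 1).factorial : ℝ))
      = ((r : ℝ) + i) / (((r : ℝ) - 1) * ((i : ℝ) + 1)) := by
    rw [mul_div_assoc', div_eq_div_iff hf (mul_ne_zero hr1 hi1)]
    linear_combination hchR
  rw [key]
  field_simp
  ring

/-- For `2 ≤ r < k`,
`∫_0^1 (g_r^r(x) - g_k^r(x))/(1-x)^2 dx = (k-r)/(r-1) + H_{k-r}`,
where `g_r^r(x) = ∑_{i=0}^{r-1} (1-x)^i` and `H_n = ∑_{i=1}^n 1/i`. -/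
theorem integral_g_diff (r k : ℕ) (hr : 2 ≤ r) (hk : r < k) :
    ∫ x in (0:ℝ)..1, ((∑ i ∈ Finset.range r, (1 - x) ^ i) - g r k x) / (1 - x) ^ 2
      = ((k : ℝ) - (r : ℝ)) / ((r : ℝ) - 1) +
          ∑ i ∈ Finset.range (k - r), (1 : ℝ) / ((i : ℝ) + 1) := by
  have hae : ∀ᵐ x : ℝ, x ∈ Set.uIoc (0:ℝ) 1 →
      ((∑ i ∈ Finset.range r, (1 - x) ^ i) - g r k x) / (1 - x) ^ 2
        = ∑ j ∈ Finset.Ico r k, (j.choose (r - 1) : ℝ) * (x ^ (j - r) * (1 - x) ^ (r - 2)) := by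
    have h1 : ∀ᵐ x : ℝ, x ≠ (1:ℝ) := by
      refine MeasureTheory.ae_iff.2 ?_
      simp only [not_not]
      simpa [Set.setOf_eq_eq_singleton] using Real.volume_singleton
    filter_upwards [h1] with x hx1 hx
    rw [Set.uIoc_of_le (by norm_num : (0:ℝ) ≤ 1)] at hx
    exact integrand_eq r k hr hk (ne_of_gt hx.1) hx1
  rw [intervalIntegral.integral_congr_ae hae]
  rw [intervalIntegral.integral_finset_sum (fun j _ => by
    apply Continuous.intervalIntegrable; fun_prop)]
  have hterm : ∀ j ∈ Finset.Ico r k,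
      (∫ x in (0:ℝ)..1, (j.choose (r - 1) : ℝ) * (x ^ (j - r) * (1 - x) ^ (r - 2)))
        = (j.choose (r - 1) : ℝ) * (((j - r).factorial : ℝ) * ((r - 2).factorial : ℝ)
            / (((j - r) + (r - 2) + 1).factorial : ℝ)) := by
    intro j _
    rw [intervalIntegral.integral_const_mul, beta_nat]
  rw [Finset.sum_congr rfl hterm, Finset.sum_Ico_eq_sum_range]
  have hterm2 : ∀ i ∈ Finset.range (k - r),
      ((r + i).choose (r - 1) : ℝ) * (((r + i - r).factorial : ℝ) * ((r - 2).factorial : ℝ)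
            / (((r + i - r) + (r - 2) + 1).factorial : ℝ))
        = 1 / ((r : ℝ) - 1) + 1 / ((i : ℝ) + 1) := by
    intro i _
    rw [show r + i - r = i by omega]
    exact term_value r i hr
  rw [Finset.sum_congr rfl hterm2, Finset.sum_add_distrib, Finset.sum_const, Finset.card_range,
    nsmul_eq_mul]
  congr 1
  rw [mul_one_div, Nat.cast_sub hk.le]
end

section
/- Let r ≥ 2 be an integer, let y ∈ (0,1), and set M = ∑_{i=0}^{r-1} y^i (so M = g_r^r(1-y)). Then ∫_0^{1-y} (g_r^r(x) - M)/(1-x)^2 dx = y^{r-1} - 1 - log(y) + ∑_{i=1}^{r-2} (1-y^i)/i; in particular this integral is at least y^{r-1} - 1 - log(y). -/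
/-!
Substituting `u = 1 - x` turns the integral into `∫ u in y..1, (∑_{i<r} u^i - M) / u^2`, and
splitting off the first two terms of the geometric sum gives the integrand
`(1 - M) / u^2 + 1 / u + ∑_{i<r-2} u^i`, which integrates termwise. Since `M (1 - y) = 1 - y^r`,
the first term contributes `(1 - M)(1/y - 1) = y^(r-1) - 1`; the remaining sum has nonnegative
terms `(1 - y^i) / i`, which gives the inequality.
-/

open Finset Real

theorem sum_Icc_one_eq_sum_range_succ {M : Type*} [AddCommMonoid M] (f : ℕ → M) (n : ℕ) :
    ∑ i ∈ Icc 1 n, f i = ∑ i ∈ range n, f (i + 1) := by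
  rw [range_eq_Ico, sum_Ico_add' f 0 n 1, zero_add, Ico_add_one_right_eq_Icc]

theorem geom_sum_sub_div_sq {K : Type*} [Field K] (n : ℕ) (M u : K) (hu : u ≠ 0) :
    (∑ i ∈ range (n + 2), u ^ i - M) / u ^ 2 = (1 - M) / u ^ 2 + u⁻¹ + ∑ i ∈ range n, u ^ i := by
  have hshift : ∑ i ∈ range (n + 2), u ^ i = u ^ 2 * ∑ i ∈ range n, u ^ i + u + 1 := by
    simp only [sum_range_succ', mul_sum, ← pow_add]
    ring_nf
  rw [hshift]
  field_simp
  ring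

theorem one_sub_geom_sum_mul_inv_sub_one {K : Type*} [Field K] (m : ℕ) {y : K} (hy : y ≠ 0) :
    (1 - ∑ i ∈ range (m + 1), y ^ i) * (y⁻¹ - 1) = y ^ m - 1 := by
  have hgeom := geom_sum_mul y (m + 1)
  field_simp
  linear_combination hgeom

theorem hasDerivAt_log_add_sum_pow_div (n : ℕ) (c : ℝ) {u : ℝ} (hu : 0 < u) :
    HasDerivAt (fun u : ℝ => -c / u + log u + ∑ i ∈ range n, u ^ (i + 1) / (i + 1))
      (c / u ^ 2 + u⁻¹ + ∑ i ∈ range n, u ^ i) u := by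
  have hinv : HasDerivAt (fun u : ℝ => -c / u) (c / u ^ 2) u := by
    simpa [div_eq_mul_inv] using (hasDerivAt_inv hu.ne').const_mul (-c)
  have hpow : HasDerivAt (fun u : ℝ => ∑ i ∈ range n, u ^ (i + 1) / (i + 1))
      (∑ i ∈ range n, u ^ i) u := by
    refine HasDerivAt.fun_sum fun i _ => ?_
    have h := (hasDerivAt_pow (i + 1) u).div_const ((i : ℝ) + 1)
    rwa [Nat.add_sub_cancel, Nat.cast_succ, mul_div_cancel_left₀ _ (by positivity)] at h
  exact (hinv.add (hasDerivAt_log hu.ne')).add hpow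

theorem integral_div_sq_add_inv_add_geom_sum (n : ℕ) (c : ℝ) {y : ℝ} (hy : 0 < y) (hy1 : y ≤ 1) :
    ∫ u in y..1, (c / u ^ 2 + u⁻¹ + ∑ i ∈ range n, u ^ i)
      = c * (y⁻¹ - 1) - log y + ∑ i ∈ range n, (1 - y ^ (i + 1)) / (i + 1) := by
  have hpos : ∀ u ∈ Set.uIcc y 1, 0 < u := fun u hu =>
    hy.trans_le (Set.uIcc_of_le hy1 ▸ hu).1
  rw [intervalIntegral.integral_eq_sub_of_hasDerivAt
    (fun u hu => hasDerivAt_log_add_sum_pow_div n c (hpos u hu))]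
  · simp only [one_pow, log_one, div_one, sum_sub_distrib, sub_div]
    ring
  · refine ContinuousOn.intervalIntegrable ?_
    refine ContinuousOn.add (ContinuousOn.add ?_ ?_) (by fun_prop)
    · exact continuousOn_const.div (by fun_prop) fun u hu => (pow_pos (hpos u hu) 2).ne'
    · exact continuousOn_inv₀.mono fun u hu => (hpos u hu).ne'

/-- For an integer `r ≥ 2`, `y ∈ (0,1)` and `M = ∑_{i=0}^{r-1} y^i = g_r^r(1-y)`,
`∫_0^{1-y} (g_r^r(x) - M)/(1-x)^2 dx = y^(r-1) - 1 - log y + ∑_{i=1}^{r-2} (1-y^i)/i`,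
and in particular this integral is at least `y^(r-1) - 1 - log y`. -/
theorem integral_grr_sub_M (r : ℕ) (hr : 2 ≤ r) (y : ℝ) (hy : y ∈ Set.Ioo (0 : ℝ) 1)
    (M : ℝ) (hM : M = ∑ i ∈ Finset.range r, y ^ i) :
    (∫ x in (0:ℝ)..(1 - y), ((∑ i ∈ Finset.range r, (1 - x) ^ i) - M) / (1 - x) ^ 2)
        = y ^ (r - 1) - 1 - Real.log y + ∑ i ∈ Finset.Icc 1 (r - 2), (1 - y ^ i) / (i : ℝ) ∧
      y ^ (r - 1) - 1 - Real.log y ≤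
        ∫ x in (0:ℝ)..(1 - y), ((∑ i ∈ Finset.range r, (1 - x) ^ i) - M) / (1 - x) ^ 2 := by
  obtain ⟨n, rfl⟩ : ∃ n, r = n + 2 := ⟨r - 2, by omega⟩
  obtain ⟨hy0, hy1⟩ := hy
  have hintegral : (∫ x in (0:ℝ)..(1 - y), ((∑ i ∈ range (n + 2), (1 - x) ^ i) - M) / (1 - x) ^ 2)
      = y ^ (n + 1) - 1 - log y + ∑ i ∈ Icc 1 n, (1 - y ^ i) / (i : ℝ) := by
    have hpos : ∀ u ∈ Set.uIcc y 1, 0 < u := fun u hu =>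
      hy0.trans_le (Set.uIcc_of_le hy1.le ▸ hu).1
    rw [intervalIntegral.integral_comp_sub_left (fun u => (∑ i ∈ range (n + 2), u ^ i - M) / u ^ 2),
      sub_sub_cancel, sub_zero,
      intervalIntegral.integral_congr fun u hu => geom_sum_sub_div_sq n M u (hpos u hu).ne',
      integral_div_sq_add_inv_add_geom_sum n (1 - M) hy0 hy1.le, hM,
      one_sub_geom_sum_mul_inv_sub_one (n + 1) hy0.ne']
    simp only [sum_Icc_one_eq_sum_range_succ, Nat.cast_add_one]
  have hsum_nonneg : 0 ≤ ∑ i ∈ Icc 1 n, (1 - y ^ i) / (i : ℝ) :=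
    sum_nonneg fun i _ => div_nonneg (sub_nonneg.mpr (pow_le_one₀ hy0.le hy1.le)) i.cast_nonneg
  simp only [Nat.reduceSubDiff, Nat.add_sub_cancel]
  exact ⟨hintegral, by linarith⟩
end

section
/- Let r ≥ 2 be an integer and let (p_k)_{k≥r} be a probability mass function on the integers k ≥ r with finite mean b = ∑_{k≥r} k·p_k (so b ≥ r). Then p_c := 1 - 1/(max_{x∈[0,1]} G^r(x)) satisfies p_c ≥ exp(-(r-2)/(r-1)) · e^{-b/(r-1)} / b, where G^r(x) = ∑_{k≥r} p_k · g_k^r(x). -/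
open Finset Nat MeasureTheory

/-- `P(Bin(k, ε) ≥ r) / ε²`, divided termwise: the exponent `i - 2` is truncated subtraction,
harmless because `i ≥ r ≥ 2` wherever it is used. -/
noncomputable def tailPoly (r k : ℕ) (ε : ℝ) : ℝ :=
  ∑ i ∈ Ico r (k + 1), (k.choose i : ℝ) * ε ^ (i - 2) * (1 - ε) ^ (k - i)

variable {r k : ℕ}

theorem one_sub_mul_g_add_sq_mul_tailPoly (hr : 2 ≤ r) (hk : r ≤ k) (ε : ℝ) :
    (1 - ε) * g r k (1 - ε) + ε ^ 2 * tailPoly r k ε = 1 := by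
  have hg : (1 - ε) * g r k (1 - ε) =
      ∑ i ∈ range r, ε ^ i * (1 - ε) ^ (k - i) * k.choose i := by
    rw [g, mul_sum]
    refine sum_congr rfl fun i hi => ?_
    obtain ⟨m, hm⟩ : ∃ m, k - i = m + 1 := ⟨k - i - 1, by have := mem_range.1 hi; omega⟩
    rw [show k - i - 1 = m by omega, hm, sub_sub_cancel]
    ring
  have ht : ε ^ 2 * tailPoly r k ε =
      ∑ i ∈ Ico r (k + 1), ε ^ i * (1 - ε) ^ (k - i) * k.choose i := by
    rw [tailPoly, mul_sum]
    refine sum_congr rfl fun i hi => ?_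
    obtain ⟨j, rfl⟩ := Nat.exists_eq_add_of_le' (hr.trans (mem_Ico.1 hi).1)
    rw [Nat.add_sub_cancel]
    ring
  rw [hg, ht, sum_range_add_sum_Ico _ (by omega), ← add_pow, add_sub_cancel, one_pow]

theorem g_nonneg {x : ℝ} (hx : x ∈ Set.Icc (0 : ℝ) 1) : 0 ≤ g r k x :=
  sum_nonneg fun _ _ => mul_nonneg (mul_nonneg (Nat.cast_nonneg _) (pow_nonneg hx.1 _))
    (pow_nonneg (sub_nonneg.2 hx.2) _)

theorem tailPoly_nonneg {ε : ℝ} (hε : ε ∈ Set.Icc (0 : ℝ) 1) : 0 ≤ tailPoly r k ε :=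
  sum_nonneg fun _ _ => mul_nonneg (mul_nonneg (Nat.cast_nonneg _) (pow_nonneg hε.1 _))
    (pow_nonneg (sub_nonneg.2 hε.2) _)

theorem continuous_tailPoly (r k : ℕ) : Continuous (tailPoly r k) := by
  unfold tailPoly; fun_prop

theorem tailPoly_le (hr : 2 ≤ r) (hk : r ≤ k) {ε : ℝ} (hε : ε ∈ Set.Ioc (0 : ℝ) 1) :
    tailPoly r k ε ≤ 1 / ε ^ 2 := by
  have hg := mul_nonneg (sub_nonneg.2 hε.2)
    (g_nonneg (r := r) (k := k) (x := 1 - ε) ⟨by linarith [hε.2], by linarith [hε.1]⟩)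
  rw [le_div_iff₀ (by positivity [hε.1])]
  linarith [one_sub_mul_g_add_sq_mul_tailPoly hr hk ε]

theorem choose_le_mul_choose {i n : ℕ} (hi : i < r) (hr : r ≤ n + 1) :
    (n + 1).choose i ≤ r * n.choose i := by
  obtain ⟨m, hm⟩ : ∃ m, n + 1 - i = m + 1 := ⟨n - i, by omega⟩
  have hkey := Nat.choose_mul_succ_eq n i
  rw [hm] at hkey
  refine Nat.le_of_mul_le_mul_right (c := m + 1) ?_ m.succ_pos
  rw [← hkey, mul_comm, mul_right_comm]
  refine Nat.mul_le_mul_right _ ?_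
  have : n + 1 = i + m + 1 := by omega
  nlinarith [Nat.mul_le_mul_right (m + 1) hi]

theorem g_le (hk : r ≤ k) {x : ℝ} (hx : x ∈ Set.Icc (0 : ℝ) 1) : g r k x ≤ r := by
  rcases k with _ | n
  · simp [g, show r = 0 by omega]
  have hx0 : 0 ≤ x := hx.1
  have hx1 : 0 ≤ 1 - x := sub_nonneg.2 hx.2
  calc g r (n + 1) x
      ≤ ∑ i ∈ range r, ((r * n.choose i : ℕ) : ℝ) * x ^ (n - i) * (1 - x) ^ i := by
        refine sum_le_sum fun i hi => ?_
        rw [show n + 1 - i - 1 = n - i by omega]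
        gcongr
        exact choose_le_mul_choose (mem_range.1 hi) hk
    _ = r * ∑ i ∈ range r, (1 - x) ^ i * x ^ (n - i) * n.choose i := by
        rw [mul_sum]
        push_cast
        exact sum_congr rfl fun _ _ => by ring
    _ ≤ r * ∑ i ∈ range (n + 1), (1 - x) ^ i * x ^ (n - i) * n.choose i := by gcongr
    _ = r := by rw [← add_pow, sub_add_cancel, one_pow, mul_one]

theorem integral_pow_mul_one_sub_pow (m n : ℕ) :
    ∫ x in (0 : ℝ)..1, x ^ m * (1 - x) ^ n = (m ! * n ! : ℝ) / (m + n + 1)! := by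
  have hB := Complex.betaIntegral_eq_Gamma_mul_div (m + 1) (n + 1)
    (by simp; positivity) (by simp; positivity)
  rw [Complex.betaIntegral, show (m + 1 : ℂ) + (n + 1) = ((m + n + 1 : ℕ) : ℂ) + 1 by push_cast; ring,
    Complex.Gamma_nat_eq_factorial, Complex.Gamma_nat_eq_factorial,
    Complex.Gamma_nat_eq_factorial] at hB
  apply Complex.ofReal_injective
  rw [← intervalIntegral.integral_ofReal]
  convert hB using 1
  · refine intervalIntegral.integral_congr fun x _ => ?_
    simp only [add_sub_cancel_right, Complex.cpow_natCast]
    push_cast; ring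
  · push_cast; ring

theorem choose_mul_integral_pow_mul_one_sub_pow {i k : ℕ} (hi : 2 ≤ i) (hik : i ≤ k) :
    ∫ x in (0 : ℝ)..1, (k.choose i : ℝ) * x ^ (i - 2) * (1 - x) ^ (k - i) =
      k / ((i - 1) * i) := by
  obtain ⟨j, rfl⟩ := Nat.exists_eq_add_of_le' hi
  obtain ⟨l, rfl⟩ := Nat.exists_eq_add_of_le hik
  simp only [mul_assoc, intervalIntegral.integral_const_mul, integral_pow_mul_one_sub_pow,
    Nat.add_sub_cancel, Nat.add_sub_cancel_left, Nat.cast_choose ℝ (Nat.le_add_right _ l)]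
  rw [show j + 2 + l = j + l + 1 + 1 by omega]
  simp only [factorial_succ]
  push_cast
  rw [show (j : ℝ) + 2 - 1 = j + 1 by ring]
  field_simp
  ring

theorem sum_Ico_one_div_sub_one_mul (hr : 2 ≤ r) (hk : r ≤ k) :
    ∑ i ∈ Ico r (k + 1), 1 / (((i : ℝ) - 1) * i) = 1 / ((r : ℝ) - 1) - 1 / k := by
  induction k, hk using Nat.le_induction with
  | base =>
    have : (r : ℝ) - 1 ≠ 0 := by linarith [show (2 : ℝ) ≤ r by exact_mod_cast hr]
    rw [sum_Ico_succ_top le_rfl, Ico_self, sum_empty, zero_add]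
    field_simp
    ring
  | succ k hk ih =>
    have : (k : ℝ) ≠ 0 := by positivity [show 0 < k by omega]
    have : (r : ℝ) - 1 ≠ 0 := by linarith [show (2 : ℝ) ≤ r by exact_mod_cast hr]
    rw [sum_Ico_succ_top (by omega), ih, Nat.cast_succ, add_sub_cancel_right]
    field_simp
    ring

theorem integral_tailPoly (hr : 2 ≤ r) (hk : r ≤ k) :
    ∫ ε in (0 : ℝ)..1, tailPoly r k ε = k / ((r : ℝ) - 1) - 1 := by
  have hk0 : (k : ℝ) ≠ 0 := by positivity [show 0 < k by omega]
  unfold tailPoly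
  rw [intervalIntegral.integral_finsetSum fun i _ => by apply Continuous.intervalIntegrable; fun_prop,
    sum_congr rfl fun i hi => choose_mul_integral_pow_mul_one_sub_pow
      (hr.trans (mem_Ico.1 hi).1) (Nat.lt_succ_iff.1 (mem_Ico.1 hi).2)]
  simp_rw [div_eq_mul_one_div (k : ℝ) ((_ : ℝ) * _)]
  rw [← mul_sum, sum_Ico_one_div_sub_one_mul hr hk, mul_sub, mul_one_div, mul_one_div_cancel hk0]

theorem lintegral_ofReal_tailPoly (hr : 2 ≤ r) (hk : r ≤ k) :
    ∫⁻ ε in Set.Ioc (0 : ℝ) 1, ENNReal.ofReal (tailPoly r k ε) =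
      ENNReal.ofReal (k / ((r : ℝ) - 1) - 1) := by
  rw [← integral_tailPoly hr hk, intervalIntegral.integral_of_le zero_le_one,
    ofReal_integral_eq_lintegral_ofReal
      (continuous_tailPoly r k).integrableOn_Ioc
      ((ae_restrict_iff' measurableSet_Ioc).2 <| Filter.Eventually.of_forall
        fun ε hε => tailPoly_nonneg (Set.Ioc_subset_Icc_self hε))]

theorem integral_sub_div_sq {c : ℝ} (hc0 : 0 < c) (hc1 : c ≤ 1) :
    ∫ ε in c..1, (ε - c) / ε ^ 2 = c - 1 - Real.log c := by
  have hderiv : ∀ ε ∈ Set.uIcc c 1,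
      HasDerivAt (fun y => Real.log y + c * y⁻¹) ((ε - c) / ε ^ 2) ε := by
    intro ε hε
    have hε0 : ε ≠ 0 := by rw [Set.uIcc_of_le hc1] at hε; linarith [hε.1]
    refine ((Real.hasDerivAt_log hε0).add ((hasDerivAt_inv hε0).const_mul c)).congr_deriv ?_
    field_simp
    ring
  have hcont : ContinuousOn (fun ε : ℝ => (ε - c) / ε ^ 2) (Set.uIcc c 1) := by
    rw [Set.uIcc_of_le hc1]
    exact ContinuousOn.div (by fun_prop) (by fun_prop)
      fun ε hε => pow_ne_zero _ (by linarith [hε.1])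
  rw [intervalIntegral.integral_eq_sub_of_hasDerivAt hderiv hcont.intervalIntegrable,
    Real.log_one]
  field_simp
  ring

theorem lintegral_ofReal_sub_div_sq {c : ℝ} (hc0 : 0 < c) (hc1 : c ≤ 1) :
    ∫⁻ ε in Set.Ioo c 1, ENNReal.ofReal ((ε - c) / ε ^ 2) =
      ENNReal.ofReal (c - 1 - Real.log c) := by
  have hcont : ContinuousOn (fun ε : ℝ => (ε - c) / ε ^ 2) (Set.Icc c 1) :=
    ContinuousOn.div (by fun_prop) (by fun_prop) fun ε hε => pow_ne_zero _ (by linarith [hε.1])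
  rw [← integral_sub_div_sq hc0 hc1, intervalIntegral.integral_of_le hc1,
    integral_Ioc_eq_integral_Ioo, ofReal_integral_eq_lintegral_ofReal
      (hcont.integrableOn_Icc.mono_set Set.Ioo_subset_Icc_self)
      ((ae_restrict_iff' measurableSet_Ioo).2 <| Filter.Eventually.of_forall
        fun ε hε => div_nonneg (by linarith [hε.1]) (sq_nonneg ε))]

noncomputable def G (r : ℕ) (p : ℕ → ℝ) (x : ℝ) : ℝ :=
  ∑' k, p k * g r k x

noncomputable def tailSum (r : ℕ) (p : ℕ → ℝ) (ε : ℝ) : ℝ :=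
  ∑' k, p k * tailPoly r k ε

theorem summable_of_tsum_ne_zero {α β : Type*} [AddCommMonoid α] [TopologicalSpace α]
    {f : β → α} (h : ∑' b, f b ≠ 0) : Summable f := by
  by_contra hf
  exact h (tsum_eq_zero_of_not_summable hf)

section Distribution

variable {p : ℕ → ℝ}

theorem mul_nonneg_of_vanish_below (hp0 : ∀ k, k < r → p k = 0) (hpnn : ∀ k, 0 ≤ p k)
    {f : ℕ → ℝ} (hf : ∀ k, r ≤ k → 0 ≤ f k) (k : ℕ) : 0 ≤ p k * f k := by
  rcases lt_or_ge k r with h | h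
  · simp [hp0 k h]
  · exact mul_nonneg (hpnn k) (hf k h)

theorem mul_le_of_vanish_below (hp0 : ∀ k, k < r → p k = 0) (hpnn : ∀ k, 0 ≤ p k)
    {f : ℕ → ℝ} {C : ℝ} (hf : ∀ k, r ≤ k → f k ≤ C) (k : ℕ) : p k * f k ≤ C * p k := by
  rcases lt_or_ge k r with h | h
  · simp [hp0 k h]
  · rw [mul_comm C]
    exact mul_le_mul_of_nonneg_left (hf k h) (hpnn k)

theorem summable_mul_of_vanish_below (hp0 : ∀ k, k < r → p k = 0) (hpnn : ∀ k, 0 ≤ p k)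
    (hp : Summable p) {f : ℕ → ℝ} {C : ℝ} (hf0 : ∀ k, r ≤ k → 0 ≤ f k)
    (hfC : ∀ k, r ≤ k → f k ≤ C) : Summable fun k => p k * f k :=
  .of_nonneg_of_le (mul_nonneg_of_vanish_below hp0 hpnn hf0)
    (mul_le_of_vanish_below hp0 hpnn hfC) (hp.mul_left C)

theorem le_tsum_natCast_mul (hp0 : ∀ k, k < r → p k = 0) (hpnn : ∀ k, 0 ≤ p k)
    (hsum : ∑' k, p k = 1) (hmean : Summable fun k : ℕ => (k : ℝ) * p k) :
    (r : ℝ) ≤ ∑' k : ℕ, (k : ℝ) * p k := by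
  have hp : Summable p := summable_of_tsum_ne_zero (hsum ▸ one_ne_zero)
  calc (r : ℝ) = ∑' k, (r : ℝ) * p k := by rw [tsum_mul_left, hsum, mul_one]
    _ ≤ ∑' k : ℕ, (k : ℝ) * p k := by
      refine hp.mul_left _ |>.tsum_le_tsum (fun k => ?_) hmean
      rcases lt_or_ge k r with h | h
      · simp [hp0 k h]
      · exact mul_le_mul_of_nonneg_right (by exact_mod_cast h) (hpnn k)

theorem G_le (hp0 : ∀ k, k < r → p k = 0) (hpnn : ∀ k, 0 ≤ p k) (hsum : ∑' k, p k = 1)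
    {x : ℝ} (hx : x ∈ Set.Icc (0 : ℝ) 1) : G r p x ≤ r := by
  have hp : Summable p := summable_of_tsum_ne_zero (hsum ▸ one_ne_zero)
  calc G r p x ≤ ∑' k, (r : ℝ) * p k :=
        (summable_mul_of_vanish_below hp0 hpnn hp (fun _ _ => g_nonneg hx)
          (fun k hk => g_le hk hx)).tsum_le_tsum
          (mul_le_of_vanish_below hp0 hpnn fun k hk => g_le hk hx) (hp.mul_left _)
    _ = r := by rw [tsum_mul_left, hsum, mul_one]

theorem summable_mul_tailPoly (hr : 2 ≤ r) (hp0 : ∀ k, k < r → p k = 0)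
    (hpnn : ∀ k, 0 ≤ p k) (hp : Summable p) {ε : ℝ} (hε : ε ∈ Set.Ioc (0 : ℝ) 1) :
    Summable fun k => p k * tailPoly r k ε :=
  summable_mul_of_vanish_below hp0 hpnn hp
    (fun _ _ => tailPoly_nonneg (Set.Ioc_subset_Icc_self hε)) fun _ hk => tailPoly_le hr hk hε

theorem one_sub_mul_G (hr : 2 ≤ r) (hp0 : ∀ k, k < r → p k = 0) (hpnn : ∀ k, 0 ≤ p k)
    (hp : Summable p) (hsum : ∑' k, p k = 1) {ε : ℝ} (hε : ε ∈ Set.Ioc (0 : ℝ) 1) :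
    (1 - ε) * G r p (1 - ε) = 1 - ε ^ 2 * tailSum r p ε := by
  have hterm : ∀ k, (1 - ε) * (p k * g r k (1 - ε)) = p k - ε ^ 2 * (p k * tailPoly r k ε) := by
    intro k
    rcases lt_or_ge k r with h | h
    · simp [hp0 k h]
    · linear_combination p k * one_sub_mul_g_add_sq_mul_tailPoly hr h ε
  rw [G, tailSum, ← tsum_mul_left, tsum_congr hterm,
    hp.tsum_sub ((summable_mul_tailPoly hr hp0 hpnn hp hε).mul_left _), hsum, tsum_mul_left]

theorem lintegral_ofReal_tailSum (hr : 2 ≤ r) (hp0 : ∀ k, k < r → p k = 0)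
    (hpnn : ∀ k, 0 ≤ p k) (hsum : ∑' k, p k = 1) (hmean : Summable fun k : ℕ => (k : ℝ) * p k) :
    ∫⁻ ε in Set.Ioc (0 : ℝ) 1, ENNReal.ofReal (tailSum r p ε) =
      ENNReal.ofReal ((∑' k : ℕ, (k : ℝ) * p k) / ((r : ℝ) - 1) - 1) := by
  have hp : Summable p := summable_of_tsum_ne_zero (hsum ▸ one_ne_zero)
  have hpoint : ∀ ε ∈ Set.Ioc (0 : ℝ) 1, ENNReal.ofReal (tailSum r p ε) =
      ∑' k, ENNReal.ofReal (p k) * ENNReal.ofReal (tailPoly r k ε) := fun ε hε => by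
    simp_rw [← ENNReal.ofReal_mul (hpnn _)]
    exact ENNReal.ofReal_tsum_of_nonneg (mul_nonneg_of_vanish_below hp0 hpnn
      fun k _ => tailPoly_nonneg (Set.Ioc_subset_Icc_self hε))
      (summable_mul_tailPoly hr hp0 hpnn hp hε)
  have hterm : ∀ k, ∫⁻ ε in Set.Ioc (0 : ℝ) 1,
      ENNReal.ofReal (p k) * ENNReal.ofReal (tailPoly r k ε) =
      ENNReal.ofReal (p k * (k / ((r : ℝ) - 1) - 1)) := fun k => by
    rcases lt_or_ge k r with h | h
    · simp [hp0 k h]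
    · rw [lintegral_const_mul _ (continuous_tailPoly r k).measurable.ennreal_ofReal,
        lintegral_ofReal_tailPoly hr h, ← ENNReal.ofReal_mul (hpnn k)]
  have hmean' : Summable fun k => p k * (k / ((r : ℝ) - 1) - 1) :=
    ((hmean.div_const ((r : ℝ) - 1)).sub hp).congr fun k => by ring
  rw [setLIntegral_congr_fun measurableSet_Ioc hpoint,
    lintegral_tsum fun k =>
      ((continuous_tailPoly r k).measurable.ennreal_ofReal.const_mul _).aemeasurable, tsum_congr hterm,
    ← ENNReal.ofReal_tsum_of_nonneg (mul_nonneg_of_vanish_below hp0 hpnn fun k hk => ?_) hmean',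
    tsum_congr fun k => show p k * (k / ((r : ℝ) - 1) - 1) = k * p k / (r - 1) - p k by ring,
    (hmean.div_const _).tsum_sub hp, tsum_div_const, hsum]
  rw [sub_nonneg, le_div_iff₀ (by linarith [show (2 : ℝ) ≤ r by exact_mod_cast hr]), one_mul]
  linarith [show (r : ℝ) ≤ k by exact_mod_cast hk]

theorem exists_tailSum_le (hr : 2 ≤ r) (hp0 : ∀ k, k < r → p k = 0) (hpnn : ∀ k, 0 ≤ p k)
    (hsum : ∑' k, p k = 1) (hmean : Summable fun k : ℕ => (k : ℝ) * p k) {c : ℝ} (hc0 : 0 < c)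
    (hc1 : c < 1) (hc : (∑' k : ℕ, (k : ℝ) * p k) / ((r : ℝ) - 1) < c - Real.log c) :
    ∃ ε ∈ Set.Ioo c 1, tailSum r p ε ≤ (ε - c) / ε ^ 2 := by
  by_contra! h
  have hint : ENNReal.ofReal (c - 1 - Real.log c) ≤
      ENNReal.ofReal ((∑' k : ℕ, (k : ℝ) * p k) / ((r : ℝ) - 1) - 1) :=
    calc ENNReal.ofReal (c - 1 - Real.log c)
        = ∫⁻ ε in Set.Ioo c 1, ENNReal.ofReal ((ε - c) / ε ^ 2) :=
          (lintegral_ofReal_sub_div_sq hc0 hc1.le).symm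
      _ ≤ ∫⁻ ε in Set.Ioo c 1, ENNReal.ofReal (tailSum r p ε) :=
          setLIntegral_mono' measurableSet_Ioo
            fun ε hε => ENNReal.ofReal_le_ofReal (h ε hε).le
      _ ≤ ∫⁻ ε in Set.Ioc 0 1, ENNReal.ofReal (tailSum r p ε) :=
          lintegral_mono_set fun ε hε => ⟨hc0.trans hε.1, hε.2.le⟩
      _ = _ := lintegral_ofReal_tailSum hr hp0 hpnn hsum hmean
  rcases ENNReal.ofReal_le_ofReal_iff'.1 hint with hle | hle
  · linarith
  · linarith [Real.log_lt_sub_one_of_pos hc0 hc1.ne]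

theorem one_div_one_sub_le_sSup_G (hr : 2 ≤ r) (hp0 : ∀ k, k < r → p k = 0)
    (hpnn : ∀ k, 0 ≤ p k) (hsum : ∑' k, p k = 1) (hmean : Summable fun k : ℕ => (k : ℝ) * p k)
    {c : ℝ} (hc0 : 0 < c) (hc1 : c < 1)
    (hc : (∑' k : ℕ, (k : ℝ) * p k) / ((r : ℝ) - 1) < c - Real.log c) :
    1 / (1 - c) ≤ sSup (G r p '' Set.Icc 0 1) := by
  have hp : Summable p := summable_of_tsum_ne_zero (hsum ▸ one_ne_zero)
  obtain ⟨ε, ⟨hcε, hε1⟩, hT⟩ := exists_tailSum_le hr hp0 hpnn hsum hmean hc0 hc1 hc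
  have hε0 : 0 < ε := hc0.trans hcε
  have hG := one_sub_mul_G hr hp0 hpnn hp hsum ⟨hε0, hε1.le⟩
  have hT' : ε ^ 2 * tailSum r p ε ≤ ε - c := by
    rwa [le_div_iff₀ (by positivity), mul_comm] at hT
  have hbdd : BddAbove (G r p '' Set.Icc 0 1) :=
    ⟨r, Set.forall_mem_image.2 fun x hx => G_le hp0 hpnn hsum hx⟩
  refine le_trans ?_ (le_csSup hbdd ⟨1 - ε, ⟨by linarith, by linarith⟩, rfl⟩)
  rw [div_le_iff₀ (by linarith)]
  nlinarith

end Distribution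

/-- For an offspring distribution `(p_k)_{k ≥ r}` with finite mean `b`, the
critical probability `p_c = 1 - 1/(max_{x∈[0,1]} G^r(x))` of the Galton–Watson tree satisfies
`p_c ≥ exp(-(r-2)/(r-1)) · e^{-b/(r-1)} / b`, where `G^r(x) = ∑_{k≥r} p_k g_k^r(x)`. -/
theorem pc_lower_bound (r : ℕ) (hr : 2 ≤ r) (p : ℕ → ℝ)
    (hp0 : ∀ k, k < r → p k = 0) (hpnn : ∀ k, 0 ≤ p k) (hsum : ∑' k : ℕ, p k = 1)
    (hmean : Summable fun k : ℕ => (k : ℝ) * p k)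
    (b : ℝ) (hb : ∑' k : ℕ, (k : ℝ) * p k = b) :
    Real.exp (-((r : ℝ) - 2) / ((r : ℝ) - 1)) * Real.exp (-b / ((r : ℝ) - 1)) / b ≤
      1 - 1 / sSup ((fun x => ∑' k : ℕ, p k * g r k x) '' Set.Icc (0 : ℝ) 1) := by
  have hr2 : (2 : ℝ) ≤ r := by exact_mod_cast hr
  have hbr : (r : ℝ) ≤ b := hb ▸ le_tsum_natCast_mul hp0 hpnn hsum hmean
  have hb0 : 0 < b := by linarith
  set c := Real.exp (-((r : ℝ) - 2) / ((r : ℝ) - 1)) * Real.exp (-b / ((r : ℝ) - 1)) / b with hc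
  have hc0 : 0 < c := by positivity
  have hc1 : c < 1 := by
    rw [div_lt_one hb0, ← Real.exp_add, ← add_div]
    calc _ ≤ Real.exp 0 := Real.exp_le_exp.2 (div_nonpos_of_nonpos_of_nonneg (by linarith) (by linarith))
      _ < b := by linarith [Real.exp_zero]
  have hlog : b / ((r : ℝ) - 1) < c - Real.log c := by
    have hlogc : Real.log c = -(((r : ℝ) - 2) / ((r : ℝ) - 1)) - b / ((r : ℝ) - 1) - Real.log b := by
      rw [hc, Real.log_div (by positivity) hb0.ne', Real.log_mul (by positivity) (by positivity),
        Real.log_exp, Real.log_exp]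
      ring
    have : 0 ≤ ((r : ℝ) - 2) / ((r : ℝ) - 1) := div_nonneg (by linarith) (by linarith)
    linarith [Real.log_pos (show 1 < b by linarith)]
  have hS := one_div_one_sub_le_sSup_G hr hp0 hpnn hsum hmean hc0 hc1 (hb ▸ hlog)
  have hS0 : 0 < sSup (G r p '' Set.Icc 0 1) := (one_div_pos.2 (by linarith)).trans_le hS
  change c ≤ 1 - 1 / sSup (G r p '' Set.Icc 0 1)
  linarith [(one_div_le hS0 (by linarith)).2 hS]
end

section
/- For every integer r ≥ 2 and every real b ≥ (r-1)·log(4er), there exists a probability mass function (p_k)_{k≥r} on the integers k ≥ r with finite mean ∑_{k≥r} k·p_k = b such that p_c := 1 - 1/(max_{x∈[0,1]} G^r(x)) satisfies p_c ≤ 2er(r-1)·e^{-b/(r-1)}, where G^r(x) = ∑_{k≥r} p_k · g_k^r(x). -/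
/-!
The weights `(r-1)/(k(k-1))`, `k ≥ r`, form a probability distribution (of infinite mean) for
which `G^r ≡ 1` on `[0,1]`. Quantitatively, the truncation to `[r, S]` satisfies
`∑_{k=r}^S (r-1)/(k(k-1)) g_k^r = 1 - shortfall r S / S` with `shortfall r S ≥ 0`, a polynomial
identity proved by induction on `S`. The missing mass `(r-1)/S` is put on two consecutive integers
`V, V+1` so that the mean becomes exactly `b`; since `g_k^r ≤ g_r^r ≤ r` for `k ≥ r`, this raises
`max G^r` by at most `r(r-1)/S`, whence `p_c ≤ r(r-1)/S`. The truncated distribution has mean at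
most `(r-1)(1 + log S)`, so `S` can be taken to be `⌈e^{b/(r-1)}/(2e)⌉`.
-/

open Finset Real

namespace BootstrapGW

variable {r k S : ℕ} {x : ℝ}

-- `x * shortfall r S x = 𝔼[(r - 1 - Bin(S, 1 - x))⁺]`
noncomputable def shortfall (r S : ℕ) (x : ℝ) : ℝ :=
  ∑ i ∈ range r, ((r - 1 - i : ℕ) : ℝ) * S.choose i * x ^ (S - 1 - i) * (1 - x) ^ i

lemma shortfall_nonneg (hx0 : 0 ≤ x) (hx1 : x ≤ 1) : 0 ≤ shortfall r S x := by
  have : 0 ≤ 1 - x := by linarith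
  exact sum_nonneg fun i _ => by positivity

lemma g_one (hr : 1 ≤ r) : g r k 1 = 1 := by
  rw [g, sum_eq_single_of_mem 0 (mem_range.2 hr) fun i _ hi => by simp [hi]]
  simp

lemma shortfall_one (hr : 1 ≤ r) : shortfall r S 1 = r - 1 := by
  rw [shortfall, sum_eq_single_of_mem 0 (mem_range.2 hr) fun i _ hi => by simp [hi]]
  simp [Nat.cast_sub hr]

lemma g_add_shortfall_self (r : ℕ) (x : ℝ) : g r r x + shortfall r r x = r := by
  cases r with
  | zero => simp [g, shortfall]
  | succ m =>
    have hbinom := add_pow (1 - x) x m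
    rw [sub_add_cancel, one_pow] at hbinom
    rw [g, shortfall, ← sum_add_distrib]
    calc ∑ i ∈ range (m + 1), _
        = ((m + 1 : ℕ) : ℝ) * ∑ i ∈ range (m + 1), (1 - x) ^ i * x ^ (m - i) * m.choose i := by
          rw [mul_sum]
          refine sum_congr rfl fun i hi => ?_
          have hchoose : ((m.choose i * (m + 1) : ℕ) : ℝ) = ((m + 1).choose i * (m + 1 - i) : ℕ) :=
            congrArg _ (Nat.choose_mul_succ_eq m i)
          have him : i ≤ m := Nat.lt_succ_iff.1 (mem_range.1 hi)
          rw [show m + 1 - i - 1 = m - i by omega, show m + 1 - 1 - i = m - i by omega]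
          push_cast [Nat.cast_sub him, Nat.cast_sub (him.trans m.le_succ)] at hchoose ⊢
          linear_combination (-(1 - x) ^ i * x ^ (m - i)) * hchoose
      _ = _ := by rw [← hbinom]; simp

lemma g_self_le (hx0 : 0 ≤ x) (hx1 : x ≤ 1) : g r r x ≤ r := by
  linarith [g_add_shortfall_self r x, shortfall_nonneg (r := r) (S := r) hx0 hx1]

lemma g_succ (hr : 1 ≤ r) (hrk : r ≤ k) :
    g r (k + 1) x = g r k x - k.choose (r - 1) * x ^ (k - r) * (1 - x) ^ r := by
  obtain ⟨m, rfl⟩ : ∃ m, r = m + 1 := ⟨r - 1, by omega⟩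
  have hxg : x * g (m + 1) k x =
      ∑ i ∈ range (m + 1), (k.choose i : ℝ) * x ^ (k - i) * (1 - x) ^ i := by
    rw [g, mul_sum]
    refine sum_congr rfl fun i hi => ?_
    rw [show k - i = k - i - 1 + 1 by have := mem_range.1 hi; omega, pow_succ, Nat.add_sub_cancel]
    ring
  have hpascal : g (m + 1) (k + 1) x =
      (1 - x) * ∑ i ∈ range m, (k.choose i : ℝ) * x ^ (k - i - 1) * (1 - x) ^ i
      + ∑ i ∈ range (m + 1), (k.choose i : ℝ) * x ^ (k - i) * (1 - x) ^ i := by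
    rw [g, sum_range_succ', sum_range_succ' (fun i => (k.choose i : ℝ) * x ^ (k - i) * (1 - x) ^ i),
      mul_sum, ← add_assoc, ← sum_add_distrib]
    simp only [Nat.choose_succ_succ, Nat.cast_add, Nat.choose_zero_right]
    congr 1
    refine sum_congr rfl fun i hi => ?_
    rw [show k + 1 - (i + 1) - 1 = k - i - 1 by omega, show k - (i + 1) = k - i - 1 by omega]
    ring
  rw [hpascal, ← hxg, g, sum_range_succ, show m + 1 - 1 = m by omega,
    show k - (m + 1) = k - m - 1 by omega]
  ring

lemma g_le_g_self (hr : 1 ≤ r) (hrk : r ≤ k) (hx0 : 0 ≤ x) (hx1 : x ≤ 1) : g r k x ≤ g r r x := by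
  induction k, hrk using Nat.le_induction with
  | base => rfl
  | succ k hrk ih =>
    have : 0 ≤ 1 - x := by linarith
    rw [g_succ hr hrk]
    nlinarith [show 0 ≤ (k.choose (r - 1) : ℝ) * x ^ (k - r) * (1 - x) ^ r by positivity]

lemma shortfall_succ (hrS : r ≤ S) :
    (S + 1) * shortfall r S x = (r - 1) * g r (S + 1) x + S * shortfall r (S + 1) x := by
  set f : ℕ → ℝ := fun j => ((r : ℝ) - j) * j * (S + 1).choose j * x ^ (S - j) * (1 - x) ^ j
  have hf : ∑ i ∈ range r, (f (i + 1) - f i) = 0 := by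
    rw [sum_range_sub]
    simp [f]
  have hterm : ∀ i ∈ range r,
      (S + 1) * (((r - 1 - i : ℕ) : ℝ) * S.choose i * x ^ (S - 1 - i) * (1 - x) ^ i)
      = (r - 1) * ((S + 1).choose i * x ^ (S + 1 - i - 1) * (1 - x) ^ i)
        + S * (((r - 1 - i : ℕ) : ℝ) * (S + 1).choose i * x ^ (S + 1 - 1 - i) * (1 - x) ^ i)
        + (f (i + 1) - f i) := by
    intro i hi
    have hir : i < r := mem_range.1 hi
    have hlow : ((S.choose i * (S + 1) : ℕ) : ℝ) = ((S + 1).choose i * (S + 1 - i) : ℕ) :=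
      congrArg _ (Nat.choose_mul_succ_eq S i)
    have hup : (((S + 1) * S.choose i : ℕ) : ℝ) = ((S + 1).choose (i + 1) * (i + 1) : ℕ) :=
      congrArg _ (Nat.add_one_mul_choose_eq S i)
    have hcoef : ((r - 1 - i : ℕ) : ℝ) = r - 1 - i := by
      rw [Nat.sub_sub, Nat.cast_sub (by omega)]; push_cast; ring
    simp only [f, hcoef]
    rw [show S + 1 - i - 1 = S - i by omega, show S + 1 - 1 - i = S - i by omega,
      show S - (i + 1) = S - 1 - i by omega, show S - i = S - 1 - i + 1 by omega, pow_succ]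
    push_cast [Nat.cast_sub (show i ≤ S + 1 by omega)] at hlow hup ⊢
    linear_combination ((r - 1 - i) * x ^ (S - 1 - i) * (1 - x) ^ i * (1 - x)) * hup
      + (x * x ^ (S - 1 - i) * (1 - x) ^ i * (r - 1 - i)) * hlow
  rw [shortfall, shortfall, g, mul_sum, sum_congr rfl hterm, sum_add_distrib, sum_add_distrib, hf,
    mul_sum, mul_sum]
  ring

theorem sum_Icc_mul_g_eq (hr : 2 ≤ r) (hrS : r ≤ S) (x : ℝ) :
    ∑ k ∈ Icc r S, ((r : ℝ) - 1) / (k * (k - 1)) * g r k x = 1 - shortfall r S x / S := by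
  have hr1 : (r : ℝ) - 1 ≠ 0 := by
    have : (2 : ℝ) ≤ r := by exact_mod_cast hr
    linarith
  induction S, hrS using Nat.le_induction with
  | base =>
    have hr0 : (r : ℝ) ≠ 0 := by positivity
    have hself := g_add_shortfall_self r x
    rw [Icc_self, sum_singleton]
    field_simp
    linear_combination hself
  | succ S hrS ih =>
    have hS : (S : ℝ) ≠ 0 := by exact_mod_cast (by omega : S ≠ 0)
    have hstep := shortfall_succ (x := x) hrS
    rw [sum_Icc_succ_top (by omega), ih]
    push_cast
    rw [add_sub_cancel_right]
    field_simp
    linear_combination -hstep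

lemma sum_Icc_mul_g_le_one (hr : 2 ≤ r) (hrS : r ≤ S) (hx0 : 0 ≤ x) (hx1 : x ≤ 1) :
    ∑ k ∈ Icc r S, ((r : ℝ) - 1) / (k * (k - 1)) * g r k x ≤ 1 := by
  rw [sum_Icc_mul_g_eq hr hrS]
  linarith [div_nonneg (shortfall_nonneg (r := r) (S := S) hx0 hx1) (Nat.cast_nonneg S)]

lemma sum_Icc_div_mul_sub_one (hr : 2 ≤ r) (hrS : r ≤ S) :
    ∑ k ∈ Icc r S, ((r : ℝ) - 1) / (k * (k - 1)) = 1 - (r - 1) / S := by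
  simpa [g_one (by omega : 1 ≤ r), shortfall_one (by omega : 1 ≤ r)] using
    sum_Icc_mul_g_eq hr hrS 1

lemma sum_Icc_inv_sub_one_le (hr : 2 ≤ r) (hrS : r ≤ S) :
    ∑ k ∈ Icc r S, 1 / ((k : ℝ) - 1) ≤ 1 + log (S - 1) := by
  calc ∑ k ∈ Icc r S, 1 / ((k : ℝ) - 1)
      = ∑ j ∈ range (S + 1 - r), 1 / (((r + j : ℕ) : ℝ) - 1) := by
        rw [← Ico_add_one_right_eq_Icc, sum_Ico_eq_sum_range]
    _ ≤ ∑ j ∈ range (S + 1 - r), (((j + 1 : ℕ) : ℝ))⁻¹ := by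
        refine sum_le_sum fun j _ => ?_
        rw [one_div]
        gcongr
        push_cast
        have : (2 : ℝ) ≤ r := by exact_mod_cast hr
        linarith
    _ = harmonic (S + 1 - r) := by simp [harmonic]
    _ ≤ 1 + log (S + 1 - r : ℕ) := harmonic_le_one_add_log _
    _ ≤ 1 + log (S - 1) := by
        gcongr
        · exact_mod_cast (by omega : 0 < S + 1 - r)
        · rw [Nat.cast_sub (by omega)]
          push_cast
          have : (2 : ℝ) ≤ r := by exact_mod_cast hr
          linarith

noncomputable def offspringPmf (r S V : ℕ) (θ : ℝ) (k : ℕ) : ℝ :=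
  (if k ∈ Icc r S then ((r : ℝ) - 1) / (k * (k - 1)) else 0)
    + ((r : ℝ) - 1) / S * ((if k = V then 1 - θ else 0) + (if k = V + 1 then θ else 0))

section offspringPmf

variable {V : ℕ} {θ : ℝ}

lemma hasSum_offspringPmf_mul (h : ℕ → ℝ) :
    HasSum (fun k => offspringPmf r S V θ k * h k)
      (∑ k ∈ Icc r S, ((r : ℝ) - 1) / (k * (k - 1)) * h k
        + ((r : ℝ) - 1) / S * ((1 - θ) * h V + θ * h (V + 1))) := by
  have hbase : HasSum (fun k => if k ∈ Icc r S then ((r : ℝ) - 1) / (k * (k - 1)) * h k else 0)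
      (∑ k ∈ Icc r S, ((r : ℝ) - 1) / (k * (k - 1)) * h k) := by
    have hfin := hasSum_sum_of_ne_finset_zero (L := SummationFilter.unconditional ℕ) (s := Icc r S)
      (f := fun k => if k ∈ Icc r S then ((r : ℝ) - 1) / (k * (k - 1)) * h k else 0)
      fun k hk => if_neg hk
    rwa [sum_congr rfl fun k hk => if_pos hk] at hfin
  have hatom : ∀ (j : ℕ) (c : ℝ), HasSum (fun k => (if k = j then c else 0) * h k) (c * h j) := by
    intro j c
    have hfun : (fun k => (if k = j then c else 0) * h k) =
        fun k => if k = j then c * h j else 0 := by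
      funext k
      split_ifs with hk
      · rw [hk]
      · rw [zero_mul]
    rw [hfun]
    exact hasSum_ite_eq j _
  convert hbase.add (((hatom V (1 - θ)).add (hatom (V + 1) θ)).mul_left (((r : ℝ) - 1) / S))
    using 2 with k
  simp only [offspringPmf]
  split_ifs <;> ring

lemma offspringPmf_of_lt (hrV : r ≤ V) (hk : k < r) : offspringPmf r S V θ k = 0 := by
  simp [offspringPmf, show k ∉ Icc r S by simp; omega, show k ≠ V by omega,
    show k ≠ V + 1 by omega]

lemma offspringPmf_nonneg (hr : 1 ≤ r) (hθ0 : 0 ≤ θ) (hθ1 : θ ≤ 1) (k : ℕ) :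
    0 ≤ offspringPmf r S V θ k := by
  have hr1 : (0 : ℝ) ≤ r - 1 := by
    have : (1 : ℝ) ≤ r := by exact_mod_cast hr
    linarith
  unfold offspringPmf
  refine add_nonneg ?_ (mul_nonneg (div_nonneg hr1 (Nat.cast_nonneg S)) ?_)
  · split_ifs with hk
    · have : (1 : ℝ) ≤ k := by exact_mod_cast hr.trans (mem_Icc.1 hk).1
      exact div_nonneg hr1 (mul_nonneg (by linarith) (by linarith))
    · rfl
  · have : 0 ≤ 1 - θ := by linarith
    split_ifs <;> positivity

lemma tsum_offspringPmf (hr : 2 ≤ r) (hrS : r ≤ S) : ∑' k, offspringPmf r S V θ k = 1 := by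
  have hsum := hasSum_offspringPmf_mul (r := r) (S := S) (V := V) (θ := θ) 1
  simp only [Pi.one_apply, mul_one] at hsum
  rw [hsum.tsum_eq, sum_Icc_div_mul_sub_one hr hrS]
  ring

lemma hasSum_mul_offspringPmf (hr : 1 ≤ r) :
    HasSum (fun k : ℕ => (k : ℝ) * offspringPmf r S V θ k)
      ((r - 1) * ∑ k ∈ Icc r S, 1 / ((k : ℝ) - 1) + (r - 1) / S * (V + θ)) := by
  convert hasSum_offspringPmf_mul (r := r) (S := S) (V := V) (θ := θ) (fun k => (k : ℝ)) using 1
  · funext k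
    ring
  · have hterm : ∀ k ∈ Icc r S,
        ((r : ℝ) - 1) / (k * (k - 1)) * k = (r - 1) * (1 / ((k : ℝ) - 1)) := by
      intro k hk
      have : (k : ℝ) ≠ 0 := by exact_mod_cast (by have := (mem_Icc.1 hk).1; omega : k ≠ 0)
      field_simp
    rw [sum_congr rfl hterm, ← mul_sum]
    push_cast
    ring

lemma tsum_offspringPmf_mul_g_le (hr : 2 ≤ r) (hrS : r ≤ S) (hrV : r ≤ V) (hθ0 : 0 ≤ θ)
    (hθ1 : θ ≤ 1) (hx0 : 0 ≤ x) (hx1 : x ≤ 1) :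
    ∑' k, offspringPmf r S V θ k * g r k x ≤ 1 + r * ((r - 1) / S) := by
  rw [(hasSum_offspringPmf_mul (fun k => g r k x)).tsum_eq]
  have hbase := sum_Icc_mul_g_le_one hr hrS hx0 hx1
  have hg : ∀ k, r ≤ k → g r k x ≤ r := fun k hk =>
    (g_le_g_self (by omega) hk hx0 hx1).trans (g_self_le hx0 hx1)
  have hV := hg V hrV
  have hV1 := hg (V + 1) (by omega)
  have hmix : (1 - θ) * g r V x + θ * g r (V + 1) x ≤ r := by nlinarith
  have hw : (0 : ℝ) ≤ (r - 1) / S := by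
    have : (1 : ℝ) ≤ r := by exact_mod_cast (by omega : 1 ≤ r)
    exact div_nonneg (by linarith) (Nat.cast_nonneg S)
  nlinarith [mul_le_mul_of_nonneg_left hmix hw]

end offspringPmf

lemma one_sub_one_div_sSup_le {s : Set ℝ} {ε : ℝ} (h1 : 1 ∈ s) (hs : ∀ y ∈ s, y ≤ 1 + ε) :
    1 - 1 / sSup s ≤ ε := by
  have hlow : 1 ≤ sSup s := le_csSup ⟨1 + ε, hs⟩ h1
  have hup : sSup s ≤ 1 + ε := csSup_le ⟨1, h1⟩ hs
  have : 1 - ε ≤ 1 / sSup s := by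
    rw [le_div_iff₀ (by linarith)]
    nlinarith
  linarith

theorem exists_pmf_of_mean_le {b : ℝ} (hr : 2 ≤ r) (hrS : r ≤ S)
    (hb : (r - 1) * ∑ k ∈ Icc r S, 1 / ((k : ℝ) - 1) + r * ((r - 1) / S) ≤ b) :
    ∃ p : ℕ → ℝ, (∀ k, k < r → p k = 0) ∧ (∀ k, 0 ≤ p k) ∧ (∑' k : ℕ, p k = 1) ∧
      (Summable fun k : ℕ => (k : ℝ) * p k) ∧ (∑' k : ℕ, (k : ℝ) * p k = b) ∧
      1 - 1 / sSup ((fun x => ∑' k : ℕ, p k * g r k x) '' Set.Icc (0 : ℝ) 1) ≤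
        r * ((r - 1) / S) := by
  set w : ℝ := (r - 1) / S
  set m : ℝ := (r - 1) * ∑ k ∈ Icc r S, 1 / ((k : ℝ) - 1)
  have hw : 0 < w := by
    have : (2 : ℝ) ≤ r := by exact_mod_cast hr
    exact div_pos (by linarith) (by exact_mod_cast (by omega : 0 < S))
  -- the mass `w` at `V` and `V + 1` must have mean `t` for the total mean to be `b`
  set t := (b - m) / w
  have ht : r ≤ t := by rw [le_div_iff₀ hw]; linarith
  set V := ⌊t⌋₊
  set θ := t - V
  have hrV : r ≤ V := Nat.le_floor ht
  have hθ0 : 0 ≤ θ := sub_nonneg.2 (Nat.floor_le ((Nat.cast_nonneg r).trans ht))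
  have hθ1 : θ ≤ 1 := by linarith [Nat.lt_floor_add_one t]
  have hmean : HasSum (fun k : ℕ => (k : ℝ) * offspringPmf r S V θ k) b := by
    convert hasSum_mul_offspringPmf (S := S) (V := V) (θ := θ) (by omega : 1 ≤ r) using 1
    rw [add_sub_cancel, mul_div_cancel₀ _ hw.ne']
    ring
  refine ⟨offspringPmf r S V θ, fun k => offspringPmf_of_lt hrV,
    offspringPmf_nonneg (by omega) hθ0 hθ1, tsum_offspringPmf hr hrS, hmean.summable,
    hmean.tsum_eq, one_sub_one_div_sSup_le ⟨1, ⟨zero_le_one, le_rfl⟩, ?_⟩ ?_⟩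
  · simpa only [g_one (by omega : 1 ≤ r), mul_one] using tsum_offspringPmf hr hrS
  · rintro _ ⟨x, ⟨hx0, hx1⟩, rfl⟩
    exact tsum_offspringPmf_mul_g_le hr hrS hrV hθ0 hθ1 hx0 hx1

lemma truncated_mean_add_le {b : ℝ} (hr : 2 ≤ r) (hS : 2 * r ≤ S)
    (hSz : (S : ℝ) - 1 ≤ exp (b / (r - 1)) / (2 * exp 1)) :
    (r - 1) * ∑ k ∈ Icc r S, 1 / ((k : ℝ) - 1) + r * ((r - 1) / S) ≤ b := by
  have hr' : (2 : ℝ) ≤ r := by exact_mod_cast hr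
  have hS' : 2 * (r : ℝ) ≤ S := by exact_mod_cast hS
  have hlog : log ((S : ℝ) - 1) ≤ b / (r - 1) - log 2 - 1 := by
    calc log ((S : ℝ) - 1) ≤ log (exp (b / (r - 1)) / (2 * exp 1)) := log_le_log (by linarith) hSz
      _ = b / (r - 1) - log 2 - 1 := by
        rw [log_div (exp_pos _).ne' (by positivity), log_mul two_ne_zero (exp_pos _).ne', log_exp,
          log_exp]
        ring
  have hharm := sum_Icc_inv_sub_one_le hr (by omega : r ≤ S)
  have hatoms : r * ((r - 1) / S) ≤ ((r : ℝ) - 1) / 2 := by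
    rw [mul_div_assoc', div_le_div_iff₀ (by linarith) two_pos]
    nlinarith
  have hlog2 : 1 / 2 < log 2 := by linarith [log_two_gt_d9]
  have hb : (r - 1) * (b / (r - 1)) = b := mul_div_cancel₀ _ (by linarith)
  calc (r - 1) * ∑ k ∈ Icc r S, 1 / ((k : ℝ) - 1) + r * ((r - 1) / S)
      ≤ (r - 1) * (b / (r - 1) - log 2) + (r - 1) / 2 := by
        gcongr
        · linarith
        · linarith
    _ ≤ b := by nlinarith

end BootstrapGW

open BootstrapGW

/-- For every `r ≥ 2` and every real `b ≥ (r-1)·log(4er)` there is an offspring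
distribution `(p_k)_{k≥r}` with mean `b` whose critical probability
`p_c = 1 - 1/(max_{x∈[0,1]} G^r(x))` satisfies `p_c ≤ 2er(r-1)·e^{-b/(r-1)}`. -/
theorem exists_pmf_small_pc (r : ℕ) (hr : 2 ≤ r) (b : ℝ)
    (hb : ((r : ℝ) - 1) * Real.log (4 * Real.exp 1 * (r : ℝ)) ≤ b) :
    ∃ p : ℕ → ℝ, (∀ k, k < r → p k = 0) ∧ (∀ k, 0 ≤ p k) ∧ (∑' k : ℕ, p k = 1) ∧
      (Summable fun k : ℕ => (k : ℝ) * p k) ∧ (∑' k : ℕ, (k : ℝ) * p k = b) ∧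
      1 - 1 / sSup ((fun x => ∑' k : ℕ, p k * g r k x) '' Set.Icc (0 : ℝ) 1) ≤
        2 * Real.exp 1 * (r : ℝ) * ((r : ℝ) - 1) * Real.exp (-b / ((r : ℝ) - 1)) := by
  have hr1 : (0 : ℝ) < r - 1 := by
    have : (2 : ℝ) ≤ r := by exact_mod_cast hr
    linarith
  set z := exp (b / (r - 1)) / (2 * exp 1) with hz_def
  have hz : 2 * (r : ℝ) ≤ z := by
    rw [le_div_iff₀ (by positivity)]
    calc 2 * r * (2 * exp 1) = exp (log (4 * exp 1 * r)) := by
          rw [exp_log (by positivity)]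
          ring
      _ ≤ exp (b / (r - 1)) := exp_le_exp.2 (by rw [le_div_iff₀ hr1]; linarith)
  have hz0 : 0 < z := by positivity
  set S := ⌈z⌉₊
  have hzS : z ≤ S := Nat.le_ceil z
  have hSz : (S : ℝ) - 1 ≤ z := by linarith [Nat.ceil_lt_add_one hz0.le]
  have hrS : 2 * r ≤ S := by exact_mod_cast (by push_cast; linarith : ((2 * r : ℕ) : ℝ) ≤ S)
  obtain ⟨p, hp0, hpnn, hpsum, hpsumm, hpmean, hpc⟩ :=
    exists_pmf_of_mean_le (b := b) hr (by omega) (truncated_mean_add_le hr hrS hSz)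
  refine ⟨p, hp0, hpnn, hpsum, hpsumm, hpmean, hpc.trans ?_⟩
  calc (r : ℝ) * ((r - 1) / S) ≤ r * ((r - 1) / z) := by gcongr
    _ = 2 * exp 1 * r * (r - 1) * exp (-b / (r - 1)) := by
      rw [neg_div, exp_neg, hz_def]
      field_simp
end

section
/- For every integer r ≥ 2 and every real α ∈ (0,1] there exists a constant c_{r,α} > 0 such that for every probability mass function (p_k)_{k≥r} on the integers k ≥ r with ∑_{k≥r} k^{1+α} p_k < ∞, the quantity p_c := 1 - 1/(max_{x∈[0,1]} G^r(x)) satisfies p_c ≥ c_{r,α} · ( ∑_{k≥r} k^{1+α} p_k )^{-1/α}, where G^r(x) = ∑_{k≥r} p_k · g_k^r(x). -/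
open Finset

/-- `P(Bin(k, 1 - x) < r)`. -/
noncomputable def lowerTail (r k : ℕ) (x : ℝ) : ℝ :=
  ∑ i ∈ range r, (k.choose i : ℝ) * x ^ (k - i) * (1 - x) ^ i

section lowerTail

variable {r s k : ℕ} {x : ℝ}

lemma mul_g_eq_lowerTail (hk : r ≤ k) : x * g r k x = lowerTail r k x := by
  rw [g, lowerTail, mul_sum]
  refine sum_congr rfl fun i hi => ?_
  rw [show x ^ (k - i) = x ^ (k - i - 1) * x by
    rw [← pow_succ]; congr 1; have := mem_range.1 hi; omega]
  ring

lemma lowerTail_nonneg (hx : x ∈ Set.Icc 0 1) : 0 ≤ lowerTail r k x :=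
  sum_nonneg fun i _ => by have := hx.2; have := hx.1; positivity

lemma lowerTail_mono (hx : x ∈ Set.Icc 0 1) (h : r ≤ s) : lowerTail r k x ≤ lowerTail s k x :=
  sum_le_sum_of_subset_of_nonneg (range_subset_range.2 h) fun i _ _ => by
    have := hx.2; have := hx.1; positivity

lemma lowerTail_succ_self : lowerTail (k + 1) k x = 1 := by
  calc lowerTail (k + 1) k x = ∑ i ∈ range (k + 1), (1 - x) ^ i * x ^ (k - i) * k.choose i :=
        sum_congr rfl fun i _ => by ring
    _ = 1 := by rw [← add_pow, sub_add_cancel, one_pow]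

lemma lowerTail_le_one (hx : x ∈ Set.Icc 0 1) (hr : r ≤ k + 1) : lowerTail r k x ≤ 1 :=
  lowerTail_succ_self (x := x) ▸ lowerTail_mono hx hr

lemma lowerTail_two : lowerTail 2 k x = x ^ k + k * x ^ (k - 1) * (1 - x) := by
  simp [lowerTail, sum_range_succ]

lemma one_sub_lowerTail_two_le (hx : x ∈ Set.Icc 0 1) :
    1 - lowerTail 2 k x ≤ k.choose 2 * (1 - x) ^ 2 := by
  rw [lowerTail_two]
  induction k with
  | zero => simp
  | succ k ih =>
    rcases k with _ | k
    · simp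
    · simp only [add_tsub_cancel_right] at ih ⊢
      calc 1 - (x ^ (k + 2) + ↑(k + 2) * x ^ (k + 1) * (1 - x))
          = 1 - (x ^ (k + 1) + ↑(k + 1) * x ^ k * (1 - x)) + (k + 1) * (1 - x) ^ 2 * x ^ k := by
            push_cast; ring
        _ ≤ (k + 1).choose 2 * (1 - x) ^ 2 + (k + 1) * (1 - x) ^ 2 * 1 := by
            gcongr; exact pow_le_one₀ hx.1 hx.2
        _ = (k + 2).choose 2 * (1 - x) ^ 2 := by
            rw [Nat.choose_succ_succ' (k + 1) 1, Nat.choose_one_right]; push_cast; ring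

lemma one_sub_lowerTail_le_rpow (hx : x ∈ Set.Icc 0 1) (hr : 2 ≤ r) {β : ℝ}
    (hβ1 : 1 ≤ β) (hβ2 : β ≤ 2) : 1 - lowerTail r k x ≤ (k * (1 - x)) ^ β := by
  have ht : 0 ≤ (k : ℝ) * (1 - x) := mul_nonneg k.cast_nonneg (by linarith [hx.2])
  rcases le_total ((k : ℝ) * (1 - x)) 1 with hle | hge
  · have hchoose : (k.choose 2 : ℝ) ≤ k ^ 2 := by
      exact_mod_cast Nat.choose_le_pow k 2
    calc 1 - lowerTail r k x ≤ 1 - lowerTail 2 k x := by linarith [lowerTail_mono hx hr (k := k)]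
      _ ≤ k.choose 2 * (1 - x) ^ 2 := one_sub_lowerTail_two_le hx
      _ ≤ (k * (1 - x)) ^ (2 : ℝ) := by
        rw [Real.rpow_two, mul_pow]; gcongr
      _ ≤ (k * (1 - x)) ^ β := Real.rpow_le_rpow_of_exponent_ge' ht hle (by linarith) hβ2
  · calc 1 - lowerTail r k x ≤ 1 := by linarith [lowerTail_nonneg hx (r := r) (k := k)]
      _ ≤ (k * (1 - x)) ^ β := Real.one_le_rpow hge (by linarith)

end lowerTail

lemma le_natCast_rpow_mul {p : ℕ → ℝ} (hp0 : p 0 = 0) (hpnn : ∀ k, 0 ≤ p k) {β : ℝ}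
    (hβ : 0 ≤ β) (k : ℕ) : p k ≤ (k : ℝ) ^ β * p k := by
  rcases k with _ | k
  · simp [hp0]
  · exact le_mul_of_one_le_left (hpnn _) (Real.one_le_rpow (by simp) hβ)

lemma one_sub_rpow_mul_moment_le {r : ℕ} (hr : 2 ≤ r) {p : ℕ → ℝ} (hp0 : ∀ k, k < r → p k = 0)
    (hpnn : ∀ k, 0 ≤ p k) (hp : Summable p) (hp1 : ∑' k, p k = 1) {β : ℝ} (hβ1 : 1 ≤ β)
    (hβ2 : β ≤ 2) (hmom : Summable fun k : ℕ => (k : ℝ) ^ β * p k) {q : ℝ} (hq0 : 0 ≤ q)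
    (hq1 : q ≤ 1) :
    1 - q ^ β * ∑' k : ℕ, (k : ℝ) ^ β * p k ≤ (1 - q) * ∑' k : ℕ, p k * g r k (1 - q) := by
  have hx : 1 - q ∈ Set.Icc (0 : ℝ) 1 := ⟨by linarith, by linarith⟩
  have hg (k : ℕ) : (1 - q) * (p k * g r k (1 - q)) = p k * lowerTail r k (1 - q) := by
    rcases lt_or_ge k r with hk | hk
    · simp [hp0 k hk]
    · rw [mul_left_comm, mul_g_eq_lowerTail hk]
  have htail (k : ℕ) : p k * (1 - (k * q) ^ β) ≤ p k * lowerTail r k (1 - q) := by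
    have := one_sub_lowerTail_le_rpow (k := k) hx hr hβ1 hβ2
    rw [sub_sub_cancel] at this
    exact mul_le_mul_of_nonneg_left (by linarith) (hpnn k)
  have hsplit : (fun k : ℕ => p k * (1 - (k * q) ^ β)) =
      fun k => p k - q ^ β * ((k : ℝ) ^ β * p k) := by
    ext k; rw [Real.mul_rpow k.cast_nonneg hq0]; ring
  have hsummable : Summable fun k => p k * lowerTail r k (1 - q) := by
    refine hp.of_nonneg_of_le (fun k => mul_nonneg (hpnn k) (lowerTail_nonneg hx)) fun k => ?_
    rcases lt_or_ge k r with hk | hk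
    · simp [hp0 k hk]
    · exact mul_le_of_le_one_right (hpnn k) (lowerTail_le_one hx (by omega))
  calc 1 - q ^ β * ∑' k : ℕ, (k : ℝ) ^ β * p k = ∑' k, p k * (1 - (k * q) ^ β) := by
        rw [hsplit, hp.tsum_sub (hmom.mul_left _), hp1, tsum_mul_left]
    _ ≤ ∑' k, p k * lowerTail r k (1 - q) :=
        (hsplit ▸ hp.sub (hmom.mul_left _)).tsum_le_tsum htail hsummable
    _ = (1 - q) * ∑' k : ℕ, p k * g r k (1 - q) := by
        rw [← tsum_mul_left]; exact tsum_congr fun k => (hg k).symm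

lemma one_sub_one_div_le_one_sub_one_div_sSup {S : Set ℝ} {y : ℝ} (hy : y ∈ S) (hy0 : 0 < y) :
    1 - 1 / y ≤ 1 - 1 / sSup S := by
  by_cases hS : BddAbove S
  · have := le_csSup hS hy
    gcongr
  · -- junk value: `sSup S = 0`, so the right-hand side is `1`
    rw [Real.sSup_of_not_bddAbove hS, div_zero, sub_zero]
    linarith [one_div_pos.2 hy0]

/-- For every `r ≥ 2` and `α ∈ (0,1]` there is a constant `c > 0` such that
for every offspring distribution `(p_k)_{k≥r}` with finite `(1+α)`-moment, the critical
probability `p_c = 1 - 1/(max_{x∈[0,1]} G^r(x))` satisfies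
`p_c ≥ c · (∑_{k≥r} k^(1+α) p_k)^(-1/α)`. -/
theorem pc_lower_bound_moment (r : ℕ) (hr : 2 ≤ r) (α : ℝ) (hα : α ∈ Set.Ioc (0 : ℝ) 1) :
    ∃ c : ℝ, 0 < c ∧
      ∀ p : ℕ → ℝ, (∀ k, k < r → p k = 0) → (∀ k, 0 ≤ p k) → (∑' k : ℕ, p k = 1) →
        (Summable fun k : ℕ => (k : ℝ) ^ (1 + α) * p k) →
        c * (∑' k : ℕ, (k : ℝ) ^ (1 + α) * p k) ^ (-1 / α) ≤
          1 - 1 / sSup ((fun x => ∑' k : ℕ, p k * g r k x) '' Set.Icc (0 : ℝ) 1) := by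
  obtain ⟨hα0, hα1⟩ := hα
  refine ⟨2 ^ (-1 / α) / 2, by positivity, fun p hp0 hpnn hp1 hmom => ?_⟩
  have hle := le_natCast_rpow_mul (hp0 0 (by omega)) hpnn (by linarith : (0 : ℝ) ≤ 1 + α)
  have hp : Summable p := hmom.of_nonneg_of_le hpnn hle
  set M := ∑' k : ℕ, (k : ℝ) ^ (1 + α) * p k
  have hM : 1 ≤ M := hp1 ▸ hp.tsum_le_tsum hle hmom
  set q := (2 * M) ^ (-1 / α) with hq
  have hq0 : 0 < q := by positivity
  have hq1 : q < 1 := Real.rpow_lt_one_of_one_lt_of_neg (by linarith)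
    (div_neg_of_neg_of_pos (by norm_num) hα0)
  have hqM : q ^ (1 + α) * M = q / 2 := by
    rw [Real.rpow_add hq0, Real.rpow_one, hq, ← Real.rpow_mul (by positivity),
      div_mul_cancel₀ _ hα0.ne', Real.rpow_neg_one]
    field_simp
  have hG := one_sub_rpow_mul_moment_le hr hp0 hpnn hp hp1 (by linarith) (by linarith) hmom
    hq0.le hq1.le
  rw [hqM] at hG
  set y := ∑' k : ℕ, p k * g r k (1 - q)
  have hy : 1 ≤ y := by nlinarith
  have hx : 1 - q ∈ Set.Icc (0 : ℝ) 1 := ⟨by linarith, by linarith⟩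
  calc 2 ^ (-1 / α) / 2 * M ^ (-1 / α) = q / 2 := by
        rw [hq, Real.mul_rpow (by norm_num) (by linarith)]; ring
    _ ≤ 1 - 1 / y := by
        rw [le_sub_comm, div_le_iff₀ (by linarith)]; nlinarith
    _ ≤ _ := one_sub_one_div_le_one_sub_one_div_sSup
        (Set.mem_image_of_mem (fun x => ∑' k : ℕ, p k * g r k x) hx) (by linarith)
end

section
/- Fix an integer r ≥ 2. For each integer b ≥ r let p_c(b) := 1 - 1/(max_{x∈[0,1]} g_b^r(x)), where g_b^r(x) = ∑_{i=0}^{r-1} C(b,i) x^{b-i-1} (1-x)^i. Then, as b → ∞ through the integers, p_c(b) = (1 - 1/r) · ((r-1)!/b^r)^{1/(r-1)} · (1 + o(1)); that is, lim_{b→∞} p_c(b) / ( (1 - 1/r)·((r-1)!/b^r)^{1/(r-1)} ) = 1. -/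
/-!
Write `e = 1 - x`, so that `x g(x) = P(Bin(b, e) < r)` and `g(1 - e) - 1` is
`(e - P(Bin(b, e) ≥ r)) / (1 - e)`. For `e` small compared with `1/b` the tail is
`C(b,r) e^r (1 + o(1))`, and `e - C(b,r) e^r` is maximal at `ε_b = (r C(b,r))^(-1/(r-1))`, with
value `(1 - 1/r) ε_b`. Evaluating at `e = ε_b` bounds `M_b = max g` from below. For the upper bound,
on `e ≤ δ_b / b` (with `δ_b → 0`) the same tangent-line estimate applies; on
`δ_b / b ≤ e ≤ K / b` the single term `C(b,r) e^r (1-e)^(b-r)` already exceeds `e`; and for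
`e ≥ K / b` each of the `r` lower binomial terms is small. Hence
`M_b = 1 + (1 + o(1)) (1 - 1/r) ε_b`, and `ε_b ~ ((r-1)!/b^r)^(1/(r-1))` since `C(b,r) ~ b^r/r!`.
-/

namespace BootstrapPercolation

open Finset Filter Topology Asymptotics

-- `s` maximises `e - A₀ e^r` for `A₀ = 1 / (r s^(r-1)) ≤ A`: compare `e^r` with its tangent at `s`.
lemma sub_mul_pow_le {r : ℕ} {A s e : ℝ} (hs : 0 < s) (he : 0 ≤ e)
    (hA : 1 ≤ r * A * s ^ (r - 1)) : e - A * e ^ r ≤ (1 - 1 / r) * s := by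
  have hr : r ≠ 0 := by rintro rfl; norm_num at hA
  have hrs : 0 < (r : ℝ) * s ^ (r - 1) := by positivity
  have hA' : 1 / (r * s ^ (r - 1)) ≤ A := by rw [div_le_iff₀ hrs]; linarith
  have htangent : s ^ r + r * s ^ (r - 1) * (e - s) ≤ e ^ r := by
    simpa using pow_add_mul_le_add_pow hs.le (by linarith : 0 ≤ 2 * s + (e - s)) r
  have hsr : s ^ r = s * s ^ (r - 1) := by rw [← pow_succ', Nat.sub_add_cancel (by omega)]
  calc e - A * e ^ r ≤ e - 1 / (r * s ^ (r - 1)) * e ^ r := by gcongr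
    _ ≤ e - 1 / (r * s ^ (r - 1)) * (s ^ r + r * s ^ (r - 1) * (e - s)) := by gcongr
    _ = (1 - 1 / r) * s := by rw [hsr]; field_simp; ring

lemma tendsto_one_sub_inv_div {α : Type*} {l : Filter α} {M c a a' : α → ℝ} {κ : ℝ}
    (hc : Tendsto c l (𝓝 0)) (hc0 : ∀ᶠ x in l, 0 < c x)
    (ha : Tendsto a l (𝓝 κ)) (ha' : Tendsto a' l (𝓝 κ))
    (hlow : ∀ᶠ x in l, 1 + c x * a x ≤ M x) (hup : ∀ᶠ x in l, M x ≤ 1 + c x * a' x) :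
    Tendsto (fun x ↦ (1 - 1 / M x) / c x) l (𝓝 κ) := by
  have hden {f : α → ℝ} (hf : Tendsto f l (𝓝 κ)) :
      Tendsto (fun x ↦ 1 + c x * f x) l (𝓝 1) := by
    simpa using tendsto_const_nhds.add (hc.mul hf)
  have hlim {f : α → ℝ} (hf : Tendsto f l (𝓝 κ)) :
      Tendsto (fun x ↦ f x / (1 + c x * f x)) l (𝓝 κ) := by
    have h := hf.div (hden hf) one_ne_zero
    rwa [div_one] at h
  refine tendsto_of_tendsto_of_tendsto_of_le_of_le' (hlim ha) (hlim ha') ?_ ?_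
  · filter_upwards [hc0, (hden ha).eventually (lt_mem_nhds one_pos), hlow] with x hc hp hM
    rw [le_div_iff₀ hc]
    calc a x / (1 + c x * a x) * c x = 1 - 1 / (1 + c x * a x) := by
          rw [one_sub_div hp.ne']; ring
      _ ≤ 1 - 1 / M x := by gcongr
  · filter_upwards [hc0, (hden ha).eventually (lt_mem_nhds one_pos), hlow, hup]
      with x hc hp hM hM'
    have hp' : 0 < 1 + c x * a' x := by linarith
    rw [div_le_iff₀ hc]
    calc 1 - 1 / M x ≤ 1 - 1 / (1 + c x * a' x) := by gcongr; linarith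
      _ = a' x / (1 + c x * a' x) * c x := by rw [one_sub_div hp'.ne']; ring

section BinomialTails

variable {n k : ℕ} {p : ℝ}

-- `P(Bin(n, p) < k)` and `P(Bin(n, p) ≥ k)`
noncomputable def lowerTail (n k : ℕ) (p : ℝ) : ℝ :=
  ∑ i ∈ range k, (n.choose i : ℝ) * p ^ i * (1 - p) ^ (n - i)

noncomputable def upperTail (n k : ℕ) (p : ℝ) : ℝ :=
  ∑ i ∈ Ico k (n + 1), (n.choose i : ℝ) * p ^ i * (1 - p) ^ (n - i)

lemma binomial_term_nonneg (i : ℕ) (hp0 : 0 ≤ p) (hp1 : p ≤ 1) :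
    0 ≤ (n.choose i : ℝ) * p ^ i * (1 - p) ^ (n - i) := by
  have : 0 ≤ 1 - p := by linarith
  positivity

lemma sum_binomial_terms (n : ℕ) (p : ℝ) :
    ∑ i ∈ range (n + 1), (n.choose i : ℝ) * p ^ i * (1 - p) ^ (n - i) = 1 := by
  have h := (add_pow p (1 - p) n).symm
  rw [add_sub_cancel, one_pow] at h
  exact (sum_congr rfl fun i _ ↦ by ring).trans h

lemma choose_mul_pow_mul_pow_le_one (hp0 : 0 ≤ p) (hp1 : p ≤ 1) (hk : k ≤ n) :
    (n.choose k : ℝ) * p ^ k * (1 - p) ^ (n - k) ≤ 1 :=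
  (single_le_sum (f := fun i ↦ (n.choose i : ℝ) * p ^ i * (1 - p) ^ (n - i))
    (fun i _ ↦ binomial_term_nonneg i hp0 hp1) (mem_range.2 (Nat.lt_succ_of_le hk))).trans_eq
    (sum_binomial_terms n p)

lemma lowerTail_add_upperTail (h : k ≤ n + 1) (p : ℝ) :
    lowerTail n k p + upperTail n k p = 1 := by
  rw [lowerTail, upperTail, sum_range_add_sum_Ico _ h, sum_binomial_terms]

lemma choose_mul_pow_mul_pow_le_upperTail (hk : k ≤ n) (hp0 : 0 ≤ p) (hp1 : p ≤ 1) :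
    (n.choose k : ℝ) * p ^ k * (1 - p) ^ (n - k) ≤ upperTail n k p :=
  single_le_sum (f := fun i ↦ (n.choose i : ℝ) * p ^ i * (1 - p) ^ (n - i))
    (fun i _ ↦ binomial_term_nonneg i hp0 hp1) (mem_Ico.2 ⟨le_rfl, Nat.lt_succ_of_le hk⟩)

lemma choose_le_choose_mul_pow (n k : ℕ) {i : ℕ} (hki : k ≤ i) :
    n.choose i ≤ n.choose k * n ^ (i - k) := by
  induction i, hki using Nat.le_induction with
  | base => simp
  | succ i hki ih =>
    calc n.choose (i + 1) ≤ n.choose (i + 1) * (i + 1) := Nat.le_mul_of_pos_right _ i.succ_pos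
      _ = n.choose i * (n - i) := Nat.choose_succ_right_eq n i
      _ ≤ n.choose k * n ^ (i - k) * n := Nat.mul_le_mul ih (Nat.sub_le n i)
      _ = n.choose k * n ^ (i + 1 - k) := by
        rw [mul_assoc, ← pow_succ, Nat.sub_add_comm hki]

/-- The tail beyond `k` is dominated by a geometric series of ratio `n p`. -/
lemma upperTail_le (hp0 : 0 ≤ p) (hp1 : p ≤ 1) (hnp : n * p < 1) :
    upperTail n k p ≤ n.choose k * p ^ k / (1 - n * p) := by
  calc upperTail n k p
      ≤ ∑ i ∈ Ico k (n + 1), (n.choose k : ℝ) * p ^ k * ((n * p) ^ (i - k)) := by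
        refine sum_le_sum fun i hi ↦ ?_
        have hki := (mem_Ico.1 hi).1
        have hchoose : (n.choose i : ℝ) ≤ n.choose k * (n : ℝ) ^ (i - k) := by
          exact_mod_cast choose_le_choose_mul_pow n k hki
        calc (n.choose i : ℝ) * p ^ i * (1 - p) ^ (n - i) ≤ n.choose i * p ^ i :=
              mul_le_of_le_one_right (by positivity) (pow_le_one₀ (by linarith) (by linarith))
          _ ≤ n.choose k * (n : ℝ) ^ (i - k) * p ^ i := by gcongr
          _ = n.choose k * p ^ k * ((n * p) ^ (i - k)) := by
            rw [mul_pow, ← Nat.add_sub_cancel' hki, pow_add, Nat.add_sub_cancel_left]; ring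
    _ = n.choose k * p ^ k * ∑ j ∈ range (n + 1 - k), (n * p) ^ j := by
        rw [← mul_sum, sum_Ico_eq_sum_range]; simp only [Nat.add_sub_cancel_left]
    _ ≤ n.choose k * p ^ k * ((n * p) ^ 0 / (1 - n * p)) := by
        gcongr
        rw [range_eq_Ico]
        exact geom_sum_Ico_le_of_lt_one (by positivity) hnp
    _ = _ := by ring

end BinomialTails

variable {r b : ℕ}

lemma mul_g_eq_one_sub_upperTail (hb : r ≤ b) (x : ℝ) :
    x * g r b x = 1 - upperTail b r (1 - x) := by
  have hlower : x * g r b x = lowerTail b r (1 - x) := by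
    rw [lowerTail, g, mul_sum]
    refine sum_congr rfl fun i hi ↦ ?_
    have hbi : 1 ≤ b - i := by have := mem_range.1 hi; omega
    conv_rhs => rw [sub_sub_cancel, ← Nat.sub_add_cancel hbi, pow_succ]
    ring
  linarith [lowerTail_add_upperTail (n := b) (by omega : r ≤ b + 1) (1 - x)]

lemma g_zero (hb : r < b) : g r b 0 = 0 :=
  sum_eq_zero fun i hi ↦ by rw [zero_pow (by have := mem_range.1 hi; omega)]; simp

/-- The maximiser of `e ↦ e - C(b,r) e^r`. -/
noncomputable def eps (r b : ℕ) : ℝ := (1 / (r * b.choose r : ℝ)) ^ (((r - 1 : ℕ) : ℝ)⁻¹)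

lemma eps_pos (hr : 1 ≤ r) (hb : r ≤ b) : 0 < eps r b := by
  have : 0 < b.choose r := Nat.choose_pos hb
  unfold eps; positivity

lemma mul_choose_mul_eps_pow (hr : 2 ≤ r) (hb : r ≤ b) :
    r * b.choose r * eps r b ^ (r - 1) = 1 := by
  have : 0 < b.choose r := Nat.choose_pos hb
  rw [eps, Real.rpow_inv_natCast_pow (by positivity) (by omega)]
  field_simp

lemma sub_le_upperTail_of_mul_le (hr : 2 ≤ r) (hb : r ≤ b) {δ e : ℝ} (he : 0 ≤ e)
    (hbe : b * e ≤ δ) (hδ : δ < 1) :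
    e - (1 - 1 / r) * (eps r b / (1 - δ)) ≤ upperTail b r e := by
  have hb2 : (2 : ℝ) ≤ b := by exact_mod_cast hr.trans hb
  have he1 : e ≤ 1 := by nlinarith
  have hδ0 : 0 ≤ δ := le_trans (by positivity) hbe
  have hδ1 : 0 < 1 - δ := by linarith
  have hbernoulli : 1 - δ ≤ (1 - e) ^ (b - r) := by
    have h := one_add_mul_sub_le_pow (by linarith : (-1 : ℝ) ≤ 1 - e) (b - r)
    have : ((b - r : ℕ) : ℝ) * e ≤ b * e := by gcongr; exact_mod_cast Nat.sub_le b r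
    linarith
  have hA : 1 ≤ r * (b.choose r * (1 - δ)) * (eps r b / (1 - δ)) ^ (r - 1) := by
    have hpow : (1 - δ) ^ (r - 1) ≤ 1 - δ := pow_le_of_le_one hδ1.le (by linarith) (by omega)
    rw [div_pow, ← mul_div_assoc, le_div_iff₀ (by positivity),
      show (r : ℝ) * (b.choose r * (1 - δ)) * eps r b ^ (r - 1)
        = r * b.choose r * eps r b ^ (r - 1) * (1 - δ) by ring,
      mul_choose_mul_eps_pow hr hb]
    linarith
  calc e - (1 - 1 / r) * (eps r b / (1 - δ)) ≤ b.choose r * (1 - δ) * e ^ r := by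
        linarith [sub_mul_pow_le (div_pos (eps_pos (by omega) hb) hδ1) he hA]
    _ ≤ b.choose r * e ^ r * (1 - e) ^ (b - r) := by
        rw [mul_right_comm]; gcongr
    _ ≤ upperTail b r e := choose_mul_pow_mul_pow_le_upperTail hb he he1

lemma le_upperTail_of_le_of_le_div (hr : 1 ≤ r) (hb : r ≤ b) {t K e : ℝ} (ht : 0 ≤ t)
    (hte : t ≤ e) (heK : e ≤ K / b) (hKb : K ≤ b)
    (hW : 1 ≤ b.choose r * t ^ (r - 1) * (1 - K / b) ^ (b - r)) :
    e ≤ upperTail b r e := by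
  have hb0 : (0 : ℝ) < b := by exact_mod_cast (by omega : 0 < b)
  have hKb1 : K / b ≤ 1 := (div_le_one hb0).2 hKb
  have he0 : 0 ≤ e := ht.trans hte
  calc e ≤ e * (b.choose r * t ^ (r - 1) * (1 - K / b) ^ (b - r)) :=
        le_mul_of_one_le_right he0 hW
    _ ≤ e * (b.choose r * e ^ (r - 1) * (1 - e) ^ (b - r)) := by gcongr
    _ = b.choose r * e ^ r * (1 - e) ^ (b - r) := by
        rw [← Nat.sub_add_cancel hr, pow_succ, Nat.sub_add_cancel hr]; ring
    _ ≤ upperTail b r e := choose_mul_pow_mul_pow_le_upperTail hb he0 (heK.trans hKb1)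

lemma le_upperTail_of_div_le (hr : 1 ≤ r) (hb : r ≤ b) {K e : ℝ} (hK1 : 1 ≤ K)
    (hK : r * b ^ r ≤ b.choose r * K) (hKe : K / b ≤ e) (he1 : e ≤ 1) :
    e ≤ upperTail b r e := by
  have hb0 : (0 : ℝ) < b := by exact_mod_cast (by omega : 0 < b)
  have hbe : K ≤ b * e := by rwa [div_le_iff₀' hb0] at hKe
  have he0 : 0 ≤ e := by nlinarith
  have hterm : ∀ i ∈ range r, (b.choose i : ℝ) * e ^ i * (1 - e) ^ (b - i)
      ≤ (b * e) ^ (r - 1) * (1 - e) ^ (b - r) * (1 - e) := by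
    intro i hi
    have hir := mem_range.1 hi
    have hchoose : (b.choose i : ℝ) * e ^ i ≤ (b * e) ^ (r - 1) :=
      calc (b.choose i : ℝ) * e ^ i ≤ b ^ i * e ^ i := by
            gcongr; exact_mod_cast Nat.choose_le_pow b i
        _ = (b * e) ^ i := (mul_pow _ _ _).symm
        _ ≤ (b * e) ^ (r - 1) := pow_le_pow_right₀ (by linarith) (by omega)
    have hpow : (1 - e) ^ (b - i) ≤ (1 - e) ^ (b - r) * (1 - e) := by
      rw [← pow_succ]
      exact pow_le_pow_of_le_one (by linarith) (by linarith) (by omega)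
    calc (b.choose i : ℝ) * e ^ i * (1 - e) ^ (b - i)
        ≤ (b * e) ^ (r - 1) * ((1 - e) ^ (b - r) * (1 - e)) := by gcongr
      _ = _ := by ring
  have hkey : r * (b * e) ^ (r - 1) ≤ b.choose r * e ^ r := by
    have hbr : (b : ℝ) ^ r = b ^ (r - 1) * b := by rw [← pow_succ, Nat.sub_add_cancel hr]
    have her : e ^ r = e ^ (r - 1) * e := by rw [← pow_succ, Nat.sub_add_cancel hr]
    have : r * (b : ℝ) ^ (r - 1) ≤ b.choose r * e := by
      have := hK.trans (mul_le_mul_of_nonneg_left hbe (Nat.cast_nonneg _))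
      rw [hbr] at this; nlinarith
    rw [mul_pow, her]
    nlinarith [pow_nonneg he0 (r - 1)]
  have hlower : lowerTail b r e ≤ 1 - e :=
    calc lowerTail b r e ≤ ∑ _i ∈ range r, (b * e) ^ (r - 1) * (1 - e) ^ (b - r) * (1 - e) :=
          sum_le_sum hterm
      _ = r * ((b * e) ^ (r - 1) * (1 - e) ^ (b - r) * (1 - e)) := by
          rw [sum_const, card_range, nsmul_eq_mul]
      _ = (r * (b * e) ^ (r - 1)) * (1 - e) ^ (b - r) * (1 - e) := by ring
      _ ≤ (b.choose r * e ^ r) * (1 - e) ^ (b - r) * (1 - e) := by gcongr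
      _ ≤ 1 * (1 - e) :=
          mul_le_mul_of_nonneg_right (choose_mul_pow_mul_pow_le_one he0 he1 hb) (by linarith)
      _ = 1 - e := one_mul _
  linarith [lowerTail_add_upperTail (n := b) (by omega : r ≤ b + 1) e]

lemma g_le (hr : 2 ≤ r) (hb : r < b) {δ K : ℝ} (hδ0 : 0 ≤ δ) (hδ1 : δ < 1) (hK1 : 1 ≤ K)
    (hKb : K ≤ b) (hK : r * b ^ r ≤ b.choose r * K)
    (hW : 1 ≤ b.choose r * (δ / b) ^ (r - 1) * (1 - K / b) ^ (b - r)) {x : ℝ}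
    (hx : x ∈ Set.Icc 0 1) :
    g r b x ≤ 1 + eps r b * ((1 - 1 / r) / ((1 - δ) * (1 - δ / b))) := by
  have hb0 : (0 : ℝ) < b := by exact_mod_cast (by omega : 0 < b)
  have hr1 : (0 : ℝ) ≤ 1 - 1 / r := by
    rw [sub_nonneg, div_le_one (by positivity)]; exact_mod_cast (by omega : 1 ≤ r)
  have hb1 : (1 : ℝ) ≤ b := by exact_mod_cast (by omega : 1 ≤ b)
  have hδb : δ / b < 1 := (div_lt_one hb0).2 (by linarith)
  have hε := (eps_pos (by omega) hb.le).le
  have hU : 0 ≤ eps r b * ((1 - 1 / r) / ((1 - δ) * (1 - δ / b))) := by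
    have : 0 < (1 - δ) * (1 - δ / b) := mul_pos (by linarith) (by linarith)
    positivity
  obtain rfl | hx0 := hx.1.eq_or_lt
  · rw [g_zero hb]; linarith
  have hid := mul_g_eq_one_sub_upperTail hb.le x
  have he0 : 0 ≤ 1 - x := by linarith [hx.2]
  rcases le_total (b * (1 - x)) δ with hA | hBD
  · have hxδ : 1 - δ / b ≤ x := by
      have : 1 - x ≤ δ / b := (le_div_iff₀' hb0).2 hA
      linarith
    have hupper := sub_le_upperTail_of_mul_le hr hb.le he0 hA hδ1
    set u := (1 - 1 / (r : ℝ)) * (eps r b / (1 - δ))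
    have hu : 0 ≤ u := mul_nonneg hr1 (div_nonneg hε (by linarith))
    have hxg : x * g r b x ≤ x * (1 + u / x) := by
      rw [mul_add, mul_one, mul_div_cancel₀ _ hx0.ne']; linarith
    calc g r b x ≤ 1 + u / x := le_of_mul_le_mul_left hxg hx0
      _ ≤ 1 + u / (1 - δ / b) := by gcongr
      _ = _ := by simp only [u]; field_simp
  · have hle : 1 - x ≤ upperTail b r (1 - x) := by
      rcases le_total (1 - x) (K / b) with hB | hD
      · exact le_upperTail_of_le_of_le_div (by omega) hb.le (by positivity)
          ((div_le_iff₀' hb0).2 hBD) hB hKb hW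
      · exact le_upperTail_of_div_le (by omega) hb.le hK1 hK hD (by linarith)
    have : x * g r b x ≤ x * 1 := by linarith
    linarith [le_of_mul_le_mul_left this hx0]

lemma one_add_le_g_one_sub_eps (hr : 2 ≤ r) (hb : r ≤ b) (hbe : b * eps r b < 1) :
    1 + eps r b * ((1 - 1 / (r * (1 - b * eps r b))) / (1 - eps r b))
      ≤ g r b (1 - eps r b) := by
  set ε := eps r b with hεdef
  have hε0 : 0 < ε := eps_pos (by omega) hb
  have hb2 : (2 : ℝ) ≤ b := by exact_mod_cast hr.trans hb
  have hε1 : 0 < 1 - ε := by nlinarith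
  have hbε : 0 < 1 - b * ε := by linarith
  have hr0 : (0 : ℝ) < r := by exact_mod_cast (by omega : 0 < r)
  have hchoose : (b.choose r : ℝ) * ε ^ r = ε / r := by
    have := mul_choose_mul_eps_pow hr hb
    rw [← hεdef] at this
    have her : ε ^ r = ε * ε ^ (r - 1) := by rw [← pow_succ', Nat.sub_add_cancel (by omega)]
    rw [eq_div_iff hr0.ne', her]
    linear_combination ε * this
  have htail := upperTail_le (n := b) (k := r) hε0.le (by linarith) hbe
  have hid := mul_g_eq_one_sub_upperTail hb (1 - ε)
  rw [sub_sub_cancel] at hid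
  rw [hchoose] at htail
  refine le_of_mul_le_mul_left ?_ hε1
  calc (1 - ε) * (1 + ε * ((1 - 1 / (r * (1 - b * ε))) / (1 - ε)))
      = 1 - ε / r / (1 - b * ε) := by field_simp; ring
    _ ≤ (1 - ε) * g r b (1 - ε) := by linarith

open Nat

lemma eventually_pow_div_le_choose (r : ℕ) :
    ∀ᶠ b : ℕ in atTop, (b : ℝ) ^ r / (2 * r !) ≤ b.choose r := by
  have hpos : ∀ᶠ b : ℕ in atTop, 0 < (b : ℝ) ^ r / r ! :=
    (eventually_gt_atTop 0).mono fun b hb ↦ by positivity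
  have h := (isEquivalent_iff_tendsto_one (hpos.mono fun _ h ↦ h.ne')).1 (isEquivalent_choose r)
  filter_upwards [h.eventually (lt_mem_nhds (by norm_num : (1 / 2 : ℝ) < 1)), hpos]
    with b hb hb0
  rw [Pi.div_apply, lt_div_iff₀ hb0] at hb
  rw [div_mul_eq_div_div_swap]
  linarith

lemma isEquivalent_eps (hr : 2 ≤ r) :
    eps r ~[atTop] fun b : ℕ ↦ (((r - 1)! : ℝ) / b ^ r) ^ (((r - 1 : ℕ) : ℝ)⁻¹) := by
  have h : (fun b : ℕ ↦ 1 / (r * b.choose r : ℝ)) ~[atTop]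
      fun b : ℕ ↦ ((r - 1)! : ℝ) / b ^ r := by
    have := ((IsEquivalent.refl (u := fun _ : ℕ ↦ (r : ℝ))).mul (isEquivalent_choose r)).inv
    refine (this.congr_left (Eventually.of_forall fun b ↦ ?_)).congr_right
      (Eventually.of_forall fun b ↦ ?_)
    · simp [one_div]
    · have : (r ! : ℝ) = r * (r - 1)! := by exact_mod_cast (mul_factorial_pred (by omega)).symm
      simp only [Pi.inv_apply, Pi.mul_apply, this]
      field_simp
  exact h.rpow fun b ↦ by positivity

lemma tendsto_natCast_mul_eps (hr : 2 ≤ r) : Tendsto (fun b : ℕ ↦ b * eps r b) atTop (𝓝 0) := by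
  have hq : (((r - 1 : ℕ) : ℝ)⁻¹) ≠ 0 := by simp; omega
  refine ((IsEquivalent.refl (u := fun b : ℕ ↦ (b : ℝ))).mul
    (isEquivalent_eps hr)).symm.tendsto_nhds ?_
  have h := (tendsto_const_div_atTop_nhds_zero_nat ((r - 1)! : ℝ)).rpow_const
    (p := ((r - 1 : ℕ) : ℝ)⁻¹) (Or.inr (by positivity))
  rw [Real.zero_rpow hq] at h
  refine h.congr' ((eventually_gt_atTop 0).mono fun b hb ↦ ?_)
  simp only [Pi.mul_apply]
  have hbr : (b : ℝ) ^ r = b ^ (r - 1) * b := by rw [← pow_succ, Nat.sub_add_cancel (by omega)]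
  calc (((r - 1)! : ℝ) / b) ^ (((r - 1 : ℕ) : ℝ)⁻¹)
      = ((b : ℝ) ^ (r - 1) * ((r - 1)! / b ^ r)) ^ (((r - 1 : ℕ) : ℝ)⁻¹) := by
        congr 1; rw [hbr]; field_simp
    _ = b * (((r - 1)! : ℝ) / b ^ r) ^ (((r - 1 : ℕ) : ℝ)⁻¹) := by
        rw [Real.mul_rpow (by positivity) (by positivity),
          Real.pow_rpow_inv_natCast (Nat.cast_nonneg b) (by omega)]

lemma tendsto_eps (hr : 2 ≤ r) : Tendsto (eps r) atTop (𝓝 0) := by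
  refine tendsto_of_tendsto_of_tendsto_of_le_of_le' tendsto_const_nhds (tendsto_natCast_mul_eps hr)
    ((eventually_ge_atTop r).mono fun b hb ↦ (eps_pos (by omega) hb).le) ?_
  filter_upwards [eventually_ge_atTop r] with b hb
  exact le_mul_of_one_le_left (eps_pos (by omega) hb).le (by exact_mod_cast (by omega : 1 ≤ b))

-- `δ_b / b` separates the first two ranges of the upper bound; `δ_b → 0` but `b δ_b^(r-1) → ∞`.
noncomputable def delta (r b : ℕ) : ℝ := (√(b : ℝ))⁻¹ ^ (((r - 1 : ℕ) : ℝ)⁻¹)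

lemma delta_pow (hr : 2 ≤ r) (b : ℕ) : delta r b ^ (r - 1) = (√(b : ℝ))⁻¹ :=
  Real.rpow_inv_natCast_pow (by positivity) (by omega)

lemma tendsto_delta (hr : 2 ≤ r) : Tendsto (delta r) atTop (𝓝 0) := by
  have h := (tendsto_inv_atTop_zero.comp
    (Real.tendsto_sqrt_atTop.comp tendsto_natCast_atTop_atTop)).rpow_const
    (p := ((r - 1 : ℕ) : ℝ)⁻¹) (Or.inr (by positivity))
  rwa [Real.zero_rpow (by simp; omega)] at h

lemma eventually_one_le_choose_mul_pow_mul_pow (hr : 2 ≤ r) (K : ℕ) :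
    ∀ᶠ b : ℕ in atTop,
      1 ≤ b.choose r * (delta r b / b) ^ (r - 1) * (1 - (K : ℝ) / b) ^ (b - r) := by
  have hlim : Tendsto (fun b : ℕ ↦ √(b : ℝ) / (2 * r !) * (1 + -(K : ℝ) / b) ^ b) atTop atTop :=
    ((Real.tendsto_sqrt_atTop.comp tendsto_natCast_atTop_atTop).atTop_div_const
      (by positivity)).atTop_mul_pos (Real.exp_pos _) (Real.tendsto_one_add_div_pow_exp _)
  filter_upwards [hlim.eventually_ge_atTop 1, eventually_pow_div_le_choose r,
    eventually_ge_atTop K, eventually_gt_atTop 0] with b h1 hC hK hb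
  have hb0 : (0 : ℝ) < b := by exact_mod_cast hb
  have hKb : (K : ℝ) / b ≤ 1 := (div_le_one hb0).2 (by exact_mod_cast hK)
  have hδ : 0 ≤ delta r b := by unfold delta; positivity
  refine h1.trans ?_
  calc √(b : ℝ) / (2 * r !) * (1 + -(K : ℝ) / b) ^ b
      = b ^ r / (2 * r !) * (delta r b ^ (r - 1) / b ^ (r - 1)) * (1 - (K : ℝ) / b) ^ b := by
        have hbr : (b : ℝ) ^ r = b ^ (r - 1) * b := by
          rw [← pow_succ, Nat.sub_add_cancel (by omega)]
        rw [delta_pow hr, hbr, neg_div, ← sub_eq_add_neg]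
        field_simp
        rw [Real.sq_sqrt hb0.le]
    _ ≤ b.choose r * (delta r b / b) ^ (r - 1) * (1 - (K : ℝ) / b) ^ b := by
        rw [div_pow]
        gcongr
    _ ≤ b.choose r * (delta r b / b) ^ (r - 1) * (1 - (K : ℝ) / b) ^ (b - r) := by
        have hK0 : 0 ≤ (K : ℝ) / b := by positivity
        exact mul_le_mul_of_nonneg_left (pow_le_pow_of_le_one (by linarith) (by linarith)
          (Nat.sub_le b r)) (by positivity)

lemma eventually_forall_g_le (hr : 2 ≤ r) : ∀ᶠ b : ℕ in atTop, ∀ x ∈ Set.Icc (0 : ℝ) 1,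
    g r b x ≤ 1 + eps r b * ((1 - 1 / r) / ((1 - delta r b) * (1 - delta r b / b))) := by
  set K : ℕ := 2 * r * (r !)
  filter_upwards [eventually_gt_atTop r, (tendsto_delta hr).eventually (gt_mem_nhds one_pos),
    eventually_ge_atTop K, eventually_pow_div_le_choose r,
    eventually_one_le_choose_mul_pow_mul_pow hr K] with b hb hδ1 hKb hC hW
  have hK : (r : ℝ) * b ^ r ≤ b.choose r * K := by
    calc (r : ℝ) * b ^ r = b ^ r / (2 * r !) * K := by simp only [K]; push_cast; field_simp
      _ ≤ b.choose r * K := by gcongr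
  exact fun x hx ↦ g_le hr hb (by unfold delta; positivity) hδ1
    (by exact_mod_cast Nat.one_le_iff_ne_zero.2 (by positivity)) (by exact_mod_cast hKb) hK hW hx

lemma tendsto_one_sub_inv_sSup_div_eps (hr : 2 ≤ r) :
    Tendsto (fun b : ℕ ↦ (1 - 1 / sSup (g r b '' Set.Icc 0 1)) / eps r b) atTop
      (𝓝 (1 - 1 / r)) := by
  have hr0 : (r : ℝ) ≠ 0 := Nat.cast_ne_zero.2 (by omega)
  have hbε := tendsto_natCast_mul_eps hr
  have hε := tendsto_eps hr
  have hδ := tendsto_delta hr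
  have hup := eventually_forall_g_le hr
  refine tendsto_one_sub_inv_div hε
    ((eventually_ge_atTop r).mono fun b hb ↦ eps_pos (by omega) hb)
    (a := fun b ↦ (1 - 1 / (r * (1 - b * eps r b))) / (1 - eps r b))
    (a' := fun b ↦ (1 - 1 / r) / ((1 - delta r b) * (1 - delta r b / b))) ?_ ?_ ?_ ?_
  · have h : Tendsto (fun b : ℕ ↦ (1 - 1 / (r * (1 - b * eps r b))) / (1 - eps r b)) atTop
        (𝓝 ((1 - 1 / (r * (1 - 0))) / (1 - 0))) :=
      (tendsto_const_nhds.sub (tendsto_const_nhds.div (tendsto_const_nhds.mul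
        (tendsto_const_nhds.sub hbε)) (by rwa [sub_zero, mul_one]))).div
        (tendsto_const_nhds.sub hε) (by norm_num)
    rwa [sub_zero, mul_one, div_one] at h
  · have h : Tendsto (fun b : ℕ ↦ (1 - 1 / r) / ((1 - delta r b) * (1 - delta r b / b))) atTop
        (𝓝 ((1 - 1 / r) / ((1 - 0) * (1 - 0)))) :=
      tendsto_const_nhds.div ((tendsto_const_nhds.sub hδ).mul
        (tendsto_const_nhds.sub (hδ.div_atTop tendsto_natCast_atTop_atTop))) (by norm_num)
    rwa [sub_zero, mul_one, div_one] at h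
  · filter_upwards [eventually_ge_atTop r, hbε.eventually (gt_mem_nhds one_pos), hup]
      with b hb hbe hup
    have hε0 := eps_pos (by omega) hb
    have hε1 : eps r b ≤ 1 := by
      have : (1 : ℝ) ≤ b := by exact_mod_cast (by omega : 1 ≤ b)
      nlinarith
    exact (one_add_le_g_one_sub_eps hr hb hbe).trans
      (le_csSup ⟨_, Set.forall_mem_image.2 hup⟩
        (Set.mem_image_of_mem _ ⟨by linarith, by linarith⟩))
  · filter_upwards [hup] with b hup
    exact csSup_le (Set.image_nonempty.2 (Set.nonempty_Icc.2 zero_le_one))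
      (Set.forall_mem_image.2 hup)

end BootstrapPercolation

/-- Fix `r ≥ 2` and let `p_c(b) = 1 - 1/(max_{x∈[0,1]} g_b^r(x))` be the
critical probability of the `(b+1)`-regular tree. Then, as `b → ∞` through the integers,
`p_c(b) / ((1 - 1/r)·((r-1)!/b^r)^(1/(r-1))) → 1`. -/
theorem pc_regular_tree_asymptotics (r : ℕ) (hr : 2 ≤ r) :
    Filter.Tendsto
      (fun b : ℕ =>
        (1 - 1 / sSup (g r b '' Set.Icc (0 : ℝ) 1)) /
          ((1 - 1 / (r : ℝ)) *
            (((r - 1).factorial : ℝ) / (b : ℝ) ^ r) ^ (1 / ((r : ℝ) - 1))))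
      Filter.atTop (nhds 1) := by
  open BootstrapPercolation Asymptotics Filter in
  have hr1 : (1 : ℝ) - 1 / r ≠ 0 := by
    have : (1 : ℝ) < r := by exact_mod_cast hr
    exact (sub_pos.2 ((div_lt_one (by positivity)).2 this)).ne'
  have hexp : (1 : ℝ) / ((r : ℝ) - 1) = ((r - 1 : ℕ) : ℝ)⁻¹ := by
    rw [one_div, Nat.cast_sub (by omega), Nat.cast_one]
  have hscale := (isEquivalent_iff_tendsto_one ((eventually_gt_atTop 0).mono
    fun b (hb : 0 < b) ↦ by positivity)).1 (isEquivalent_eps hr)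
  have h := ((tendsto_one_sub_inv_sSup_div_eps hr).mul hscale).div_const (1 - 1 / r)
  rw [mul_one, div_self hr1] at h
  simp_rw [hexp]
  refine h.congr' ((eventually_ge_atTop r).mono fun b hb ↦ ?_)
  have := eps_pos (by omega) hb
  simp only [Pi.div_apply]
  field_simp
end

section
/- For every integer k ≥ 2 and every x ∈ [0,1], k·x^{k-2} - (k-1)·x^{k-1} ≤ 1 + 1/((k-1)(2k-3)). -/
/-!
Write `k = n + 2`, so the left side is `x ^ n * (n + 2 - (n + 1) * x)`. The tangent line of
`y ↦ y ^ (n + 1)` at `x`, evaluated at the maximiser `t = n (n + 2) / (n + 1) ^ 2`, bounds this by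
`(n + 2) / (n + 1) * t ^ n`. Since `1 / t = 1 + 1 / (n (n + 2))`, the second-order Bernoulli
inequality bounds `t ^ n`, and what is left is a polynomial inequality with slack `n ^ 2 + 7 n - 2`.
-/

theorem one_add_mul_add_choose_two_mul_sq_le_pow {R : Type*} [CommSemiring R] [PartialOrder R]
    [IsOrderedRing R] {s : R} (hs : 0 ≤ s) (n : ℕ) :
    1 + n * s + n.choose 2 * s ^ 2 ≤ (1 + s) ^ n := by
  induction n with
  | zero => simp
  | succ n ih =>
    calc 1 + ↑(n + 1) * s + ↑((n + 1).choose 2) * s ^ 2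
        ≤ 1 + ↑(n + 1) * s + ↑((n + 1).choose 2) * s ^ 2 + n.choose 2 * s ^ 3 :=
          le_add_of_nonneg_right (by positivity)
      _ = (1 + n * s + n.choose 2 * s ^ 2) * (1 + s) := by
          simp only [Nat.choose_succ_succ', Nat.choose_one_right]; push_cast; ring
      _ ≤ (1 + s) ^ (n + 1) := by
          rw [pow_succ (1 + s) n]
          exact mul_le_mul_of_nonneg_right ih (add_nonneg zero_le_one hs)

theorem pow_mul_sub_le_of_nonneg (n : ℕ) {x : ℝ} (hx : 0 ≤ x) :
    x ^ n * (n + 2 - (n + 1) * x) ≤ (n + 2) / (n + 1) * (n * (n + 2) / (n + 1) ^ 2) ^ n := by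
  rcases n.eq_zero_or_pos with rfl | hn
  · norm_num [hx]
  set t : ℝ := n * (n + 2) / (n + 1) ^ 2
  have ht : (n + 1) ^ 2 * t = n * (n + 2) := by simp only [t]; field_simp
  have ht0 : 0 ≤ t := by positivity
  clear_value t
  have hn' : (0 : ℝ) < n := by exact_mod_cast hn
  have tangent := pow_add_mul_le_add_pow hx (by linarith : 0 ≤ 2 * x + (t - x)) (n + 1)
  rw [add_sub_cancel, Nat.add_sub_cancel] at tangent
  refine le_of_mul_le_mul_left ?_ hn'
  calc n * (x ^ n * (n + 2 - (n + 1) * x))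
      = (n + 1) * (x ^ (n + 1) + ↑(n + 1) * x ^ n * (t - x)) := by
        push_cast; linear_combination -x ^ n * ht
    _ ≤ (n + 1) * t ^ (n + 1) := by gcongr
    _ = n * ((n + 2) / (n + 1) * t ^ n) := by
        field_simp; linear_combination t ^ n * ht

theorem add_two_div_mul_pow_le (n : ℕ) :
    (n + 2) / (n + 1) * (n * (n + 2) / (n + 1) ^ 2 : ℝ) ^ n
      ≤ 1 + 1 / ((n + 1) * (2 * n + 1)) := by
  rcases n.eq_zero_or_pos with rfl | hn
  · norm_num
  have hn' : (1 : ℝ) ≤ n := by exact_mod_cast hn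
  set s : ℝ := 1 / (n * (n + 2))
  have bernoulli := one_add_mul_add_choose_two_mul_sq_le_pow (by positivity : 0 ≤ s) n
  rw [Nat.cast_choose_two] at bernoulli
  have ht : (n * (n + 2) / (n + 1) ^ 2 : ℝ) = (1 + s)⁻¹ := by simp only [s]; field_simp; ring
  rw [ht, inv_pow, ← div_eq_mul_inv, div_le_iff₀ (by positivity)]
  calc (n + 2) / (n + 1)
      ≤ (1 + 1 / ((n + 1) * (2 * n + 1))) * (1 + n * s + n * (n - 1) / 2 * s ^ 2) := by
        simp only [s]; rw [div_le_iff₀ (by positivity)]; field_simp; nlinarith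
    _ ≤ _ := by gcongr

/-- For every integer `k ≥ 2` and every `x ∈ [0,1]`,
`k x^(k-2) - (k-1) x^(k-1) ≤ 1 + 1/((k-1)(2k-3))`. -/
theorem g_k_two_le (k : ℕ) (hk : 2 ≤ k) (x : ℝ) (hx : x ∈ Set.Icc (0 : ℝ) 1) :
    (k : ℝ) * x ^ (k - 2) - ((k : ℝ) - 1) * x ^ (k - 1)
      ≤ 1 + 1 / (((k : ℝ) - 1) * (2 * (k : ℝ) - 3)) := by
  obtain ⟨n, rfl⟩ := Nat.exists_eq_add_of_le' hk
  calc ((n + 2 : ℕ) : ℝ) * x ^ (n + 2 - 2) - ((n + 2 : ℕ) - 1) * x ^ (n + 2 - 1)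
      = x ^ n * (n + 2 - (n + 1) * x) := by
        rw [Nat.add_sub_cancel, show n + 2 - 1 = n + 1 by omega]; push_cast; ring
    _ ≤ (n + 2) / (n + 1) * (n * (n + 2) / (n + 1) ^ 2) ^ n := pow_mul_sub_le_of_nonneg n hx.1
    _ ≤ 1 + 1 / ((n + 1) * (2 * n + 1)) := add_two_div_mul_pow_le n
    _ = 1 + 1 / ((((n + 2 : ℕ) : ℝ) - 1) * (2 * ((n + 2 : ℕ) : ℝ) - 3)) := by
        push_cast; ring_nf
end

section
/- Let (p_k)_{k≥2} be a probability mass function on the integers k ≥ 2, and let p_c := 1 - 1/(max_{x∈[0,1]} G(x)) where G(x) = ∑_{k≥2} p_k·(k·x^{k-2} - (k-1)·x^{k-1}). Then: (i) if p_2 > 0 then p_c ≥ 1 - 1/(2·p_2); and (ii) for every integer k ≥ 3 with p_k > 0, p_c ≥ 1 - (k-1)^{2k-3}/( k^{k-1}·(k-2)^{k-2}·p_k ). -/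
lemma bern_aux (m : ℕ) (t : ℝ) (h0 : 0 ≤ t) (h1 : t ≤ 1) :
    (1 - t) ^ m * (1 + m * t) ≤ 1 := by
  induction m with
  | zero => simp
  | succ n ih =>
    have hp : (0:ℝ) ≤ (1 - t) ^ n := pow_nonneg (by linarith) n
    push_cast
    push_cast at ih
    have hstep : (1 - t) ^ (n + 1) * (1 + (n + 1) * t)
        ≤ (1 - t) ^ n * (1 + n * t) := by
      rw [pow_succ]
      nlinarith [mul_nonneg hp (sq_nonneg t)]
    push_cast at hstep
    linarith

lemma g_nonneg_s15 (n : ℕ) (x : ℝ) (h0 : 0 ≤ x) (h1 : x ≤ 1) :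
    0 ≤ ((n:ℝ) + 2) * x ^ n - ((n:ℝ) + 1) * x ^ (n + 1) := by
  rw [pow_succ]
  nlinarith [pow_nonneg h0 n, mul_nonneg (pow_nonneg h0 n) (by linarith : (0:ℝ) ≤ 1 - x)]

lemma g_le_two (n : ℕ) (x : ℝ) (h0 : 0 ≤ x) (h1 : x ≤ 1) :
    ((n:ℝ) + 2) * x ^ n - ((n:ℝ) + 1) * x ^ (n + 1) ≤ 2 := by
  have hb := bern_aux n (1 - x) (by linarith) (by linarith)
  have hx : x ^ n ≤ 1 := pow_le_one₀ h0 h1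
  rw [pow_succ]
  have h2 : (1 : ℝ) - (1 - x) = x := by ring
  rw [h2] at hb
  nlinarith [pow_nonneg h0 n, mul_nonneg (pow_nonneg h0 n) h0]

/-- For an offspring distribution `(p_k)_{k≥2}` with
`G(x) = ∑_{k≥2} p_k (k x^(k-2) - (k-1) x^(k-1))` and critical probability
`p_c = 1 - 1/(max_{x∈[0,1]} G(x))`:
(i) if `p_2 > 0` then `p_c ≥ 1 - 1/(2 p_2)`;
(ii) for every `k ≥ 3` with `p_k > 0`,
`p_c ≥ 1 - (k-1)^(2k-3)/(k^(k-1) (k-2)^(k-2) p_k)`. -/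
theorem pc_two_lower_bounds (p : ℕ → ℝ)
    (hp0 : ∀ k, k < 2 → p k = 0) (hpnn : ∀ k, 0 ≤ p k) (hsum : ∑' k : ℕ, p k = 1)
    (pc : ℝ)
    (hpc : pc = 1 - 1 / sSup ((fun x => ∑' k : ℕ,
        p k * ((k : ℝ) * x ^ (k - 2) - ((k : ℝ) - 1) * x ^ (k - 1))) '' Set.Icc (0 : ℝ) 1)) :
    (0 < p 2 → 1 - 1 / (2 * p 2) ≤ pc) ∧
      (∀ k : ℕ, 3 ≤ k → 0 < p k →
        1 - ((k : ℝ) - 1) ^ (2 * k - 3) /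
            ((k : ℝ) ^ (k - 1) * ((k : ℝ) - 2) ^ (k - 2) * p k) ≤ pc) := by
  have hpsum : Summable p := by
    by_contra h
    rw [tsum_eq_zero_of_not_summable h] at hsum
    norm_num at hsum
  -- termwise bounds
  have key : ∀ x ∈ Set.Icc (0:ℝ) 1, ∀ j : ℕ,
      0 ≤ p j * ((j : ℝ) * x ^ (j - 2) - ((j : ℝ) - 1) * x ^ (j - 1)) ∧
      p j * ((j : ℝ) * x ^ (j - 2) - ((j : ℝ) - 1) * x ^ (j - 1)) ≤ 2 * p j := by
    intro x hx j
    rcases lt_or_ge j 2 with hj | hj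
    · rw [hp0 j hj]; norm_num
    · obtain ⟨n, rfl⟩ : ∃ n, j = n + 2 := ⟨j - 2, by omega⟩
      have e1 : n + 2 - 2 = n := by omega
      have e2 : n + 2 - 1 = n + 1 := by omega
      rw [e1, e2]
      have h1 := g_nonneg_s15 n x hx.1 hx.2
      have h2 := g_le_two n x hx.1 hx.2
      have hc : ((n + 2 : ℕ) : ℝ) = (n:ℝ) + 2 := by push_cast; ring
      rw [hc]
      have hg : (0:ℝ) ≤ ((n:ℝ)+2) * x ^ n - ((n:ℝ)+2 - 1) * x ^ (n+1) := by
        have : ((n:ℝ)+2-1) = (n:ℝ)+1 := by ring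
        rw [this]; exact h1
      constructor
      · exact mul_nonneg (hpnn _) hg
      · have hpn := hpnn (n+2)
        nlinarith
  have hSummand : ∀ x ∈ Set.Icc (0:ℝ) 1, Summable (fun j : ℕ =>
      p j * ((j : ℝ) * x ^ (j - 2) - ((j : ℝ) - 1) * x ^ (j - 1))) := by
    intro x hx
    exact Summable.of_nonneg_of_le (fun j => (key x hx j).1) (fun j => (key x hx j).2)
      (hpsum.mul_left 2)
  -- the set is bounded above by 2
  have hbdd : BddAbove ((fun x => ∑' k : ℕ,
      p k * ((k : ℝ) * x ^ (k - 2) - ((k : ℝ) - 1) * x ^ (k - 1))) '' Set.Icc (0 : ℝ) 1) := by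
    refine ⟨2, ?_⟩
    rintro y ⟨x, hx, rfl⟩
    have h2 : (∑' k : ℕ, p k * ((k : ℝ) * x ^ (k - 2) - ((k : ℝ) - 1) * x ^ (k - 1)))
        ≤ ∑' k : ℕ, 2 * p k :=
      Summable.tsum_le_tsum (fun j => (key x hx j).2) (hSummand x hx) (hpsum.mul_left 2)
    have h3 : (∑' k : ℕ, 2 * p k) = 2 := by
      rw [tsum_mul_left, hsum, mul_one]
    simpa [h3] using h2
  -- generic lower bound on sSup
  have hlow : ∀ x ∈ Set.Icc (0:ℝ) 1, ∀ j : ℕ,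
      p j * ((j : ℝ) * x ^ (j - 2) - ((j : ℝ) - 1) * x ^ (j - 1)) ≤
      sSup ((fun x => ∑' k : ℕ,
        p k * ((k : ℝ) * x ^ (k - 2) - ((k : ℝ) - 1) * x ^ (k - 1))) '' Set.Icc (0 : ℝ) 1) := by
    intro x hx j
    have h1 : p j * ((j : ℝ) * x ^ (j - 2) - ((j : ℝ) - 1) * x ^ (j - 1)) ≤
        ∑' k : ℕ, p k * ((k : ℝ) * x ^ (k - 2) - ((k : ℝ) - 1) * x ^ (k - 1)) :=
      Summable.le_tsum (hSummand x hx) j (fun i _ => (key x hx i).1)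
    exact h1.trans (le_csSup hbdd ⟨x, hx, rfl⟩)
  constructor
  · -- part (i)
    intro hp2
    have h0mem : (0:ℝ) ∈ Set.Icc (0:ℝ) 1 := by constructor <;> norm_num
    have hv : p 2 * ((2 : ℝ) * (0:ℝ) ^ (2 - 2) - ((2 : ℝ) - 1) * (0:ℝ) ^ (2 - 1)) = 2 * p 2 := by
      norm_num; ring
    have h2M := hlow 0 h0mem 2
    rw [show ((2:ℕ):ℝ) = (2:ℝ) by norm_num] at h2M
    rw [hv] at h2M
    have hMpos : (0:ℝ) < 2 * p 2 := by linarith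
    have := one_div_le_one_div_of_le hMpos h2M
    rw [hpc]; linarith
  · -- part (ii)
    intro k hk3 hpk
    obtain ⟨m, rfl⟩ : ∃ m, k = m + 3 := ⟨k - 3, by omega⟩
    set A : ℝ := (m:ℝ) + 3 with hA
    set B : ℝ := (m:ℝ) + 2 with hB
    set C : ℝ := (m:ℝ) + 1 with hC
    have hApos : 0 < A := by rw [hA]; positivity
    have hBpos : 0 < B := by rw [hB]; positivity
    have hCpos : 0 < C := by rw [hC]; positivity
    set x : ℝ := A * C / B ^ 2 with hxdef
    have hx0 : 0 ≤ x := by positivity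
    have hx1 : x ≤ 1 := by
      rw [hxdef, div_le_one (by positivity)]
      rw [hA, hB, hC]; nlinarith
    have hxmem : x ∈ Set.Icc (0:ℝ) 1 := ⟨hx0, hx1⟩
    have e1 : m + 3 - 2 = m + 1 := by omega
    have e2 : m + 3 - 1 = m + 2 := by omega
    have e3 : 2 * (m + 3) - 3 = 2 * m + 3 := by omega
    have hcast : ((m + 3 : ℕ) : ℝ) = A := by rw [hA]; push_cast; ring
    have hval : ((m+3:ℕ) : ℝ) * x ^ (m + 3 - 2) - (((m+3:ℕ) : ℝ) - 1) * x ^ (m + 3 - 1)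
        = A ^ (m+2) * C ^ (m+1) / B ^ (2*m+3) := by
      rw [e1, e2, hcast, hxdef]
      have hBne : B ≠ 0 := ne_of_gt hBpos
      rw [div_pow, div_pow, mul_pow, mul_pow, ← pow_mul, ← pow_mul]
      field_simp
      rw [hA, hB, hC]
      ring
    have hD : p (m+3) * (A ^ (m+2) * C ^ (m+1) / B ^ (2*m+3)) ≤
        sSup ((fun x => ∑' k : ℕ,
          p k * ((k : ℝ) * x ^ (k - 2) - ((k : ℝ) - 1) * x ^ (k - 1))) '' Set.Icc (0 : ℝ) 1) := by
      have := hlow x hxmem (m+3)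
      rw [hval] at this
      exact this
    have hDpos : 0 < p (m+3) * (A ^ (m+2) * C ^ (m+1) / B ^ (2*m+3)) := by positivity
    have hinv := one_div_le_one_div_of_le hDpos hD
    have hrw : 1 / (p (m+3) * (A ^ (m+2) * C ^ (m+1) / B ^ (2*m+3)))
        = B ^ (2*m+3) / (A ^ (m+2) * C ^ (m+1) * p (m+3)) := by
      field_simp
    rw [hrw] at hinv
    have hc1 : ((m+3:ℕ):ℝ) - 1 = B := by rw [hB]; push_cast; ring
    have hc2 : ((m+3:ℕ):ℝ) - 2 = C := by rw [hC]; push_cast; ring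
    rw [hpc, hc1, hc2, hcast, e1, e2, e3]
    linarith
end

section
/- Let (p_k)_{k≥2} be a probability mass function on the integers k ≥ 2, and let p_c := 1 - 1/(max_{x∈[0,1]} G(x)) where G(x) = ∑_{k≥2} p_k·(k·x^{k-2} - (k-1)·x^{k-1}). Then p_c ≤ ∑_{k≥2} p_k / ((k-1)(2k-3)) ≤ ∑_{k≥2} 4·p_k / k². -/
lemma bern (m : ℕ) (t : ℝ) (h0 : 0 ≤ t) (h1 : t ≤ 1) :
    (1 - t)^m ≤ 1 - m*t + m*(m-1)/2*t^2 := by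
  induction m with
  | zero => simp
  | succ n ih =>
    have h2 : (0:ℝ) ≤ 1 - t := by linarith
    have h3 : (1 - t)^(n+1) = (1-t)^n * (1-t) := pow_succ _ _
    have h4 : (1-t)^n * (1-t) ≤ (1 - n*t + n*(n-1)/2*t^2) * (1-t) :=
      mul_le_mul_of_nonneg_right ih h2
    have hn : (0:ℝ) ≤ n := Nat.cast_nonneg n
    have h5 : (1 - (n:ℝ)*t + n*(n-1)/2*t^2) * (1-t)
        ≤ 1 - (n+1)*t + (n+1)*((n:ℝ)+1-1)/2*t^2 := by
      have h6 : (0:ℝ) ≤ (n:ℝ)*((n:ℝ)-1) := by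
        rcases Nat.eq_zero_or_pos n with h|h
        · simp [h]
        · have : (1:ℝ) ≤ n := by exact_mod_cast h
          nlinarith
      nlinarith [mul_nonneg h6 (mul_nonneg (mul_nonneg h0 h0) h0)]
    calc (1 - t)^(n+1) = (1-t)^n * (1-t) := h3
    _ ≤ _ := h4
    _ ≤ _ := h5
    _ = 1 - (↑(n+1))*t + (↑(n+1))*((↑(n+1):ℝ)-1)/2*t^2 := by push_cast; ring

lemma poly_step (m : ℕ) (hb : ((m:ℝ)*((m:ℝ)+2)/((m:ℝ)+1)^2)^m
      ≤ 1 - m*(1/((m:ℝ)+1)^2) + m*(m-1)/2*(1/((m:ℝ)+1)^2)^2) :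
    ((m:ℝ)*((m:ℝ)+2)/((m:ℝ)+1)^2)^m * (((m:ℝ)+2)/((m:ℝ)+1))
      ≤ 1 + 1/(((m:ℝ)+1)*(2*(m:ℝ)+1)) := by
  set n : ℝ := (m:ℝ) with hn
  have hn0 : (0:ℝ) ≤ n := Nat.cast_nonneg m
  have h1 : (0:ℝ) < n + 1 := by linarith
  have h2 : (0:ℝ) < 2*n + 1 := by linarith
  have hfrac : (0:ℝ) ≤ n+2 := by linarith
  have step : (1 - n*(1/(n+1)^2) + n*(n-1)/2*(1/(n+1)^2)^2) * ((n+2)/(n+1))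
      ≤ 1 + 1/((n+1)*(2*n+1)) := by
    rw [← sub_nonneg]
    have key : 1 + 1/((n+1)*(2*n+1))
        - (1 - n*(1/(n+1)^2) + n*(n-1)/2*(1/(n+1)^2)^2) * ((n+2)/(n+1))
        = (n^3 + 5*n^2 + 2*n) / (2*(n+1)^5*(2*n+1)) := by
      field_simp
      ring
    rw [key]
    positivity
  have hmul : ((n*(n+2))/(n+1)^2)^m * ((n+2)/(n+1))
      ≤ (1 - n*(1/(n+1)^2) + n*(n-1)/2*(1/(n+1)^2)^2) * ((n+2)/(n+1)) := by
    apply mul_le_mul_of_nonneg_right hb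
    positivity
  exact le_trans hmul step

lemma amgm_step (m : ℕ) (hm : 1 ≤ m) (x : ℝ) (hx0 : 0 ≤ x) (hx1 : x ≤ 1) :
    x^m * (((m:ℝ)+2) - ((m:ℝ)+1)*x)
      ≤ ((m:ℝ)*((m:ℝ)+2)/((m:ℝ)+1)^2)^m * (((m:ℝ)+2)/((m:ℝ)+1)) := by
  set n : ℝ := (m:ℝ) with hndef
  have hn1 : (1:ℝ) ≤ n := by rw [hndef]; exact_mod_cast hm
  have hn0 : (0:ℝ) < n := by linarith
  have h1 : (0:ℝ) < n + 1 := by linarith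
  set y : ℝ := (n+2) - (n+1)*x with hy
  have hy0 : 0 ≤ y := by nlinarith
  set p₁ : ℝ := (n+1)*x/n with hp1
  have hp10 : 0 ≤ p₁ := by positivity
  have hgm : p₁ ^ (n/(n+1)) * y ^ (1/(n+1)) ≤ (n/(n+1)) * p₁ + (1/(n+1)) * y := by
    apply Real.geom_mean_le_arith_mean2_weighted (by positivity) (by positivity) hp10 hy0
    field_simp
  have hsum : (n/(n+1)) * p₁ + (1/(n+1)) * y = (n+2)/(n+1) := by
    rw [hp1, hy]; field_simp; ring
  rw [hsum] at hgm
  have hlhs0 : 0 ≤ p₁ ^ (n/(n+1)) * y ^ (1/(n+1)) := by positivity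
  have hpow := Real.rpow_le_rpow hlhs0 hgm (by positivity : (0:ℝ) ≤ n+1)
  rw [Real.mul_rpow (by positivity) (by positivity)] at hpow
  have e1 : (p₁ ^ (n/(n+1))) ^ (n+1 : ℝ) = p₁ ^ (n : ℝ) := by
    rw [← Real.rpow_mul hp10]
    congr 1
    field_simp
  have e2 : (y ^ (1/(n+1))) ^ (n+1 : ℝ) = y ^ (1 : ℝ) := by
    rw [← Real.rpow_mul hy0]
    congr 1
    field_simp
  rw [e1, e2, Real.rpow_one] at hpow
  have hx_eq : x ^ (m:ℕ) = (n/(n+1))^(m:ℕ) * p₁ ^ (m:ℕ) := by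
    rw [hp1, ← mul_pow]
    congr 1
    field_simp
  have hrw : p₁ ^ (n:ℝ) = p₁ ^ (m:ℕ) := by
    rw [Real.rpow_natCast]
  have hrw2 : ((n+2)/(n+1)) ^ ((n:ℝ)+1) = ((n+2)/(n+1)) ^ (m+1:ℕ) := by
    rw [← Real.rpow_natCast ((n+2)/(n+1)) (m+1)]
    congr 1
    push_cast
    ring
  rw [hrw, hrw2] at hpow
  calc x ^ (m:ℕ) * y = (n/(n+1))^(m:ℕ) * (p₁ ^ (m:ℕ) * y) := by rw [hx_eq]; ring
  _ ≤ (n/(n+1))^(m:ℕ) * (((n+2)/(n+1)) ^ (m+1:ℕ)) := by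
      apply mul_le_mul_of_nonneg_left hpow (by positivity)
  _ = (n*(n+2)/(n+1)^2)^m * ((n+2)/(n+1)) := by
      rw [pow_succ, ← mul_assoc, ← mul_pow]
      congr 2
      field_simp

lemma key_ineq (k : ℕ) (hk : 2 ≤ k) (x : ℝ) (hx0 : 0 ≤ x) (hx1 : x ≤ 1) :
    (k:ℝ) * x ^ (k-2) - ((k:ℝ)-1) * x ^ (k-1)
      ≤ 1 + 1/(((k:ℝ)-1)*(2*(k:ℝ)-3)) := by
  obtain ⟨m, rfl⟩ : ∃ m, k = m + 2 := ⟨k - 2, by omega⟩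
  have e2 : m + 2 - 2 = m := by omega
  have e1 : m + 2 - 1 = m + 1 := by omega
  rw [e1, e2]
  have hc : ((m+2 : ℕ):ℝ) = (m:ℝ) + 2 := by push_cast; ring
  rw [hc]
  have hlhs : ((m:ℝ)+2) * x^m - ((m:ℝ)+2-1) * x^(m+1)
      = x^m * (((m:ℝ)+2) - ((m:ℝ)+1)*x) := by ring
  have hrhs : 1 + 1/((((m:ℝ)+2)-1)*(2*((m:ℝ)+2)-3))
      = 1 + 1/(((m:ℝ)+1)*(2*(m:ℝ)+1)) := by
    rw [show ((m:ℝ)+2)-1 = (m:ℝ)+1 from by ring,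
        show 2*((m:ℝ)+2)-3 = 2*(m:ℝ)+1 from by ring]
  rw [hlhs, hrhs]
  rcases Nat.eq_zero_or_pos m with hm | hm
  · subst hm
    norm_num
    nlinarith
  · have hb : ((m:ℝ)*((m:ℝ)+2)/((m:ℝ)+1)^2)^m
        ≤ 1 - m*(1/((m:ℝ)+1)^2) + m*(m-1)/2*(1/((m:ℝ)+1)^2)^2 := by
      have h1 : (0:ℝ) < (m:ℝ) + 1 := by positivity
      have heq : (m:ℝ)*((m:ℝ)+2)/((m:ℝ)+1)^2 = 1 - 1/((m:ℝ)+1)^2 := by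
        field_simp
        ring
      rw [heq]
      exact bern m _ (by positivity) (by
        rw [div_le_one (by positivity)]
        nlinarith [Nat.cast_nonneg (α := ℝ) m])
    exact le_trans (amgm_step m hm x hx0 hx1) (poly_step m hb)

/-- For an offspring distribution `(p_k)_{k≥2}` with
`G(x) = ∑_{k≥2} p_k (k x^(k-2) - (k-1) x^(k-1))`, the critical probability
`p_c = 1 - 1/(max_{x∈[0,1]} G(x))` satisfies
`p_c ≤ ∑_{k≥2} p_k/((k-1)(2k-3)) ≤ ∑_{k≥2} 4 p_k / k²`. -/
theorem pc_two_upper_bounds (p : ℕ → ℝ)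
    (hp0 : ∀ k, k < 2 → p k = 0) (hpnn : ∀ k, 0 ≤ p k) (hsum : ∑' k : ℕ, p k = 1) :
    1 - 1 / sSup ((fun x => ∑' k : ℕ,
        p k * ((k : ℝ) * x ^ (k - 2) - ((k : ℝ) - 1) * x ^ (k - 1))) '' Set.Icc (0 : ℝ) 1)
      ≤ ∑' k : ℕ, p k / (((k : ℝ) - 1) * (2 * (k : ℝ) - 3)) ∧
    (∑' k : ℕ, p k / (((k : ℝ) - 1) * (2 * (k : ℝ) - 3)))
      ≤ ∑' k : ℕ, 4 * p k / (k : ℝ) ^ 2 := by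
  have hsummable : Summable p := by
    by_contra h
    rw [tsum_eq_zero_of_not_summable h] at hsum
    norm_num at hsum
  set s : ℕ → ℝ := fun k => p k / (((k : ℝ) - 1) * (2 * (k : ℝ) - 3)) with hs_def
  set q : ℕ → ℝ := fun k => 4 * p k / (k : ℝ) ^ 2 with hq_def
  have hs0 : ∀ k, k < 2 → s k = 0 := by
    intro k hk
    simp only [hs_def, hp0 k hk, zero_div]
  have hq0 : ∀ k, k < 2 → q k = 0 := by
    intro k hk
    simp only [hq_def, hp0 k hk, mul_zero, zero_div]
  have hk2cast : ∀ k : ℕ, 2 ≤ k → (2:ℝ) ≤ (k:ℝ) := fun k hk => by exact_mod_cast hk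
  have hdpos : ∀ k : ℕ, 2 ≤ k → 0 < ((k:ℝ) - 1) * (2 * (k:ℝ) - 3) := by
    intro k hk
    have := hk2cast k hk
    nlinarith
  have hs_nonneg : ∀ k, 0 ≤ s k := by
    intro k
    rcases lt_or_ge k 2 with hk | hk
    · rw [hs0 k hk]
    · exact div_nonneg (hpnn k) (le_of_lt (hdpos k hk))
  have hs_le_p : ∀ k, s k ≤ p k := by
    intro k
    rcases lt_or_ge k 2 with hk | hk
    · rw [hs0 k hk, hp0 k hk]
    · have h1 : (1:ℝ) ≤ ((k:ℝ) - 1) * (2 * (k:ℝ) - 3) := by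
        have := hk2cast k hk
        nlinarith
      exact div_le_self (hpnn k) h1
  have hs_summable : Summable s := Summable.of_nonneg_of_le hs_nonneg hs_le_p hsummable
  have hq_le_p : ∀ k, q k ≤ p k := by
    intro k
    rcases lt_or_ge k 2 with hk | hk
    · rw [hq0 k hk, hp0 k hk]
    · have hc := hk2cast k hk
      rw [div_le_iff₀ (by nlinarith : (0:ℝ) < (k:ℝ)^2)]
      nlinarith [hpnn k, mul_nonneg (hpnn k) (sq_nonneg ((k:ℝ) - 2)),
        mul_nonneg (hpnn k) (by linarith : (0:ℝ) ≤ (k:ℝ) - 2)]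
  have hq_nonneg : ∀ k, 0 ≤ q k := by
    intro k
    rcases lt_or_ge k 2 with hk | hk
    · rw [hq0 k hk]
    · have hc := hk2cast k hk
      exact div_nonneg (by linarith [hpnn k]) (sq_nonneg _)
  have hq_summable : Summable q := Summable.of_nonneg_of_le hq_nonneg hq_le_p hsummable
  have hsq : ∀ k, s k ≤ q k := by
    intro k
    rcases lt_or_ge k 2 with hk | hk
    · rw [hs0 k hk, hq0 k hk]
    · have hc := hk2cast k hk
      rw [hs_def, hq_def]
      rw [div_le_div_iff₀ (hdpos k hk) (by nlinarith : (0:ℝ) < (k:ℝ)^2)]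
      nlinarith [mul_nonneg (hpnn k) (sq_nonneg ((k:ℝ) - 2)),
        mul_nonneg (hpnn k) (by linarith : (0:ℝ) ≤ (k:ℝ) - 2)]
  have second : (∑' k, s k) ≤ ∑' k, q k := Summable.tsum_le_tsum hsq hs_summable hq_summable
  refine ⟨?_, second⟩
  -- first inequality
  set S : ℝ := ∑' k, s k with hS_def
  have hS0 : 0 ≤ S := tsum_nonneg hs_nonneg
  set G : ℝ → ℝ := fun x => ∑' k : ℕ,
      p k * ((k : ℝ) * x ^ (k - 2) - ((k : ℝ) - 1) * x ^ (k - 1)) with hG_def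
  have hterm : ∀ x ∈ Set.Icc (0:ℝ) 1, ∀ k : ℕ,
      p k * ((k : ℝ) * x ^ (k - 2) - ((k : ℝ) - 1) * x ^ (k - 1)) ≤ p k + s k := by
    intro x hx k
    rcases lt_or_ge k 2 with hk | hk
    · rw [hp0 k hk, hs0 k hk]
      norm_num
    · have hkey := key_ineq k hk x hx.1 hx.2
      have h2 := mul_le_mul_of_nonneg_left hkey (hpnn k)
      calc p k * ((k : ℝ) * x ^ (k - 2) - ((k : ℝ) - 1) * x ^ (k - 1))
          ≤ p k * (1 + 1/(((k:ℝ)-1)*(2*(k:ℝ)-3))) := h2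
        _ = p k + s k := by rw [hs_def]; simp only []; ring
  have hGle : ∀ x ∈ Set.Icc (0:ℝ) 1, G x ≤ 1 + S := by
    intro x hx
    simp only [hG_def]
    by_cases hf : Summable (fun k : ℕ =>
        p k * ((k : ℝ) * x ^ (k - 2) - ((k : ℝ) - 1) * x ^ (k - 1)))
    · have h1 : (∑' k : ℕ, p k * ((k : ℝ) * x ^ (k - 2) - ((k : ℝ) - 1) * x ^ (k - 1)))
          ≤ ∑' k : ℕ, (p k + s k) :=
        Summable.tsum_le_tsum (hterm x hx) hf (hsummable.add hs_summable)
      rwa [Summable.tsum_add hsummable hs_summable, hsum] at h1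
    · rw [tsum_eq_zero_of_not_summable hf]
      linarith
  have hmem1 : G 1 ∈ (G '' Set.Icc (0:ℝ) 1) :=
    ⟨1, Set.mem_Icc.mpr ⟨zero_le_one, le_refl 1⟩, rfl⟩
  have hne : (G '' Set.Icc (0:ℝ) 1).Nonempty := ⟨G 1, hmem1⟩
  have hbdd : BddAbove (G '' Set.Icc (0:ℝ) 1) := by
    refine ⟨1 + S, ?_⟩
    rintro _ ⟨x, hx, rfl⟩
    exact hGle x hx
  set M : ℝ := sSup (G '' Set.Icc (0:ℝ) 1) with hM_def
  have hMle : M ≤ 1 + S := by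
    apply csSup_le hne
    rintro _ ⟨x, hx, rfl⟩
    exact hGle x hx
  have hG1 : G 1 = 1 := by
    simp only [hG_def]
    have : ∀ k : ℕ, p k * ((k : ℝ) * (1:ℝ) ^ (k - 2) - ((k : ℝ) - 1) * (1:ℝ) ^ (k - 1))
        = p k := by
      intro k
      rw [one_pow, one_pow]
      ring
    rw [tsum_congr this, hsum]
  have hM1 : 1 ≤ M := by
    rw [← hG1]
    exact le_csSup hbdd hmem1
  have hMpos : (0:ℝ) < M := lt_of_lt_of_le one_pos hM1
  have hinv : 2 - M ≤ 1 / M := by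
    rw [← sub_nonneg]
    have : 1 / M - (2 - M) = (M - 1)^2 / M := by
      field_simp
      ring
    rw [this]
    positivity
  linarith
end
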